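/- arXiv:2102.13070 — 9 statements merged into one kernel-verified Lean document; each statement's English description precedes it below -/
import Mathlib

section
/- Suppose η : ℤ → ℝ^n satisfies, for every k ∈ ℤ, the fixed-point equation η(k) = Σ_{j∈ℤ} φ(k−j)·( f̃(η(j−1), ŷ(j−1), j−1) − Ã·η(j−1) ), where for each k the series converges absolutely, and suppose Σ_{j∈ℤ} ‖f̃(η(j), ŷ(j), j) − Ã·η(j)‖_∞ < ∞. Then η is an exact solution of the inverse-system state dynamics: η(k+1) = f̃(η(k), ŷ(k), k) for all k ∈ ℤ. -/
/-!
The kernel `φ` is a two-sided Green's function of `x ↦ x(· + 1) - Ã x`: one checks blockwise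
that `φ(m + 1) = Ã φ(m) + [m = -1] I`. Applying this termwise to the convolution
`η(k + 1) = Σⱼ φ(k + 1 - j) g(j)`, with `g(j) = f̃(η(j-1), ŷ(j-1), j-1) - Ã η(j-1)`, gives
`η(k + 1) = Ã η(k) + g(k + 1) = f̃(η(k), ŷ(k), k)`.
-/

open Matrix

noncomputable section

/-- The matrix sequence `φ : ℤ → ℝ^{n×n}` of the stable inversion theory:
`φ(k) = blockdiag(Ãₛ^k, 0)` for `k > 0`, `φ(0) = blockdiag(I, 0)`, and
`φ(k) = blockdiag(0, −Ãᵤ^k)` for `k < 0`, where `Ãᵤ^k := (Ãᵤ⁻¹)^{−k}`. -/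
def stabPhi {ns nu : ℕ} (As : Matrix (Fin ns) (Fin ns) ℝ)
    (Au : Matrix (Fin nu) (Fin nu) ℝ) :
    ℤ → Matrix (Fin ns ⊕ Fin nu) (Fin ns ⊕ Fin nu) ℝ := fun k =>
  if 0 < k then Matrix.fromBlocks (As ^ k.toNat) 0 0 0
  else if k = 0 then Matrix.fromBlocks 1 0 0 0
  else Matrix.fromBlocks 0 0 0 (-(Au⁻¹ ^ (-k).toNat))

section ConvolutionRecursion

variable {n R : Type*} [Fintype n] [CommRing R] [TopologicalSpace R] [IsTopologicalRing R]

theorem HasSum.matrix_mulVec {ι : Type*} {f : ι → n → R} {v : n → R} (hf : HasSum f v)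
    (A : Matrix n n R) : HasSum (fun i => A *ᵥ f i) (A *ᵥ v) :=
  hf.map (mulVecLin A) (continuous_const.matrix_mulVec continuous_id)

theorem convolution_add_one_eq_mulVec_add [DecidableEq n] [T2Space R] (A : Matrix n n R)
    {Φ : ℤ → Matrix n n R}
    (hΦ : ∀ m, Φ (m + 1) = A * Φ m + if m = -1 then 1 else 0) {g x : ℤ → n → R}
    (hx : ∀ k, x k = ∑' j, Φ (k - j) *ᵥ g j) {k : ℤ}
    (hk : Summable fun j => Φ (k - j) *ᵥ g j) :
    x (k + 1) = A *ᵥ x k + g (k + 1) := by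
  have hterm : ∀ j, Φ (k + 1 - j) *ᵥ g j =
      A *ᵥ (Φ (k - j) *ᵥ g j) + if j = k + 1 then g (k + 1) else 0 := by
    intro j
    rw [show k + 1 - j = k - j + 1 by ring, hΦ, add_mulVec, mulVec_mulVec]
    by_cases hj : j = k + 1
    · simp [hj]
    · simp [hj, show k - j ≠ -1 by omega]
  have hsum : HasSum (fun j => Φ (k + 1 - j) *ᵥ g j) (A *ᵥ x k + g (k + 1)) := by
    simp only [hterm, hx k]
    exact (hk.hasSum.matrix_mulVec A).add (hasSum_ite_eq (k + 1) (g (k + 1)))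
  rw [hx, hsum.tsum_eq]

end ConvolutionRecursion

section StabPhi

variable {ns nu : ℕ} (As : Matrix (Fin ns) (Fin ns) ℝ) (Au : Matrix (Fin nu) (Fin nu) ℝ)

theorem stabPhi_of_nonneg {k : ℤ} (hk : 0 ≤ k) :
    stabPhi As Au k = fromBlocks (As ^ k.toNat) 0 0 0 := by
  rcases hk.lt_or_eq with hk | rfl
  · simp [stabPhi, hk]
  · simp [stabPhi]

theorem stabPhi_of_neg {k : ℤ} (hk : k < 0) :
    stabPhi As Au k = fromBlocks 0 0 0 (-(Au⁻¹ ^ (-k).toNat)) := by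
  simp [stabPhi, hk.not_gt, hk.ne]

theorem stabPhi_add_one (hAu : IsUnit Au.det) (m : ℤ) :
    stabPhi As Au (m + 1) = fromBlocks As 0 0 Au * stabPhi As Au m +
      if m = -1 then 1 else 0 := by
  have hinv : Au * Au⁻¹ = 1 := mul_nonsing_inv Au hAu
  rcases lt_trichotomy m (-1) with hm | rfl | hm
  · obtain ⟨t, ht⟩ : ∃ t : ℕ, (-(m + 1)).toNat = t ∧ (-m).toNat = t + 1 :=
      ⟨_, rfl, by omega⟩
    rw [stabPhi_of_neg As Au (by omega), stabPhi_of_neg As Au (by omega), ht.1, ht.2,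
      if_neg hm.ne, fromBlocks_multiply, pow_succ', mul_neg, ← Matrix.mul_assoc, hinv]
    simp
  · rw [show (-1 : ℤ) + 1 = 0 by norm_num, stabPhi_of_nonneg As Au le_rfl,
      stabPhi_of_neg As Au (by norm_num), if_pos rfl, fromBlocks_multiply, ← fromBlocks_one,
      fromBlocks_add]
    simp [hinv]
  · rw [stabPhi_of_nonneg As Au (by omega), stabPhi_of_nonneg As Au (by omega),
      if_neg hm.ne', fromBlocks_multiply, show (m + 1).toNat = m.toNat + 1 by omega, pow_succ']
    simp

end StabPhi

theorem stable_inversion_fixed_point_solves_dynamics_general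
    (ns nu μ : ℕ)
    (As : Matrix (Fin ns) (Fin ns) ℝ) (Au : Matrix (Fin nu) (Fin nu) ℝ)
    (hAu : IsUnit Au.det)
    (Atil : Matrix (Fin ns ⊕ Fin nu) (Fin ns ⊕ Fin nu) ℝ)
    (hAtil : Atil = Matrix.fromBlocks As 0 0 Au)
    (ftil : (Fin ns ⊕ Fin nu → ℝ) → (Fin (μ+1) → ℝ) → ℤ → (Fin ns ⊕ Fin nu → ℝ))
    (yhat : ℤ → (Fin (μ+1) → ℝ))
    (η : ℤ → (Fin ns ⊕ Fin nu → ℝ))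
    -- for every k the series defining the fixed-point equation converges absolutely
    (habs : ∀ k : ℤ, Summable fun j : ℤ =>
      ‖(stabPhi As Au (k - j)).mulVec
        (ftil (η (j-1)) (yhat (j-1)) (j-1) - Atil.mulVec (η (j-1)))‖)
    -- the fixed-point equation
    (hfix : ∀ k : ℤ, η k = ∑' j : ℤ,
      (stabPhi As Au (k - j)).mulVec
        (ftil (η (j-1)) (yhat (j-1)) (j-1) - Atil.mulVec (η (j-1)))) :
    ∀ k : ℤ, η (k+1) = ftil (η k) (yhat k) k := by
  intro k
  have hΦ : ∀ m, stabPhi As Au (m + 1) = Atil * stabPhi As Au m + if m = -1 then 1 else 0 :=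
    hAtil ▸ stabPhi_add_one As Au hAu
  rw [convolution_add_one_eq_mulVec_add Atil hΦ hfix (habs k).of_norm, add_sub_cancel_right,
    add_sub_cancel]

/-- A bounded bi-infinite solution of the fixed-point equation of stable inversion is an
exact solution of the inverse-system state dynamics `η(k+1) = f̃(η(k), ŷ(k), k)`. -/
theorem stable_inversion_fixed_point_solves_dynamics
    (ns nu μ : ℕ) (hμ : 1 ≤ μ)
    (As : Matrix (Fin ns) (Fin ns) ℝ) (Au : Matrix (Fin nu) (Fin nu) ℝ)
    (hAu : IsUnit Au.det)
    (Atil : Matrix (Fin ns ⊕ Fin nu) (Fin ns ⊕ Fin nu) ℝ)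
    (hAtil : Atil = Matrix.fromBlocks As 0 0 Au)
    (ftil : (Fin ns ⊕ Fin nu → ℝ) → (Fin (μ+1) → ℝ) → ℤ → (Fin ns ⊕ Fin nu → ℝ))
    (yhat : ℤ → (Fin (μ+1) → ℝ))
    (η : ℤ → (Fin ns ⊕ Fin nu → ℝ))
    -- for every k the series defining the fixed-point equation converges absolutely
    (habs : ∀ k : ℤ, Summable fun j : ℤ =>
      ‖(stabPhi As Au (k - j)).mulVec
        (ftil (η (j-1)) (yhat (j-1)) (j-1) - Atil.mulVec (η (j-1)))‖)
    -- the fixed-point equation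
    (hfix : ∀ k : ℤ, η k = ∑' j : ℤ,
      (stabPhi As Au (k - j)).mulVec
        (ftil (η (j-1)) (yhat (j-1)) (j-1) - Atil.mulVec (η (j-1))))
    -- summability of the nonlinear residuals
    (hsum : Summable fun j : ℤ => ‖ftil (η j) (yhat j) j - Atil.mulVec (η j)‖) :
    ∀ k : ℤ, η (k+1) = ftil (η k) (yhat k) k :=
  stable_inversion_fixed_point_solves_dynamics_general ns nu μ As Au hAu Atil hAtil ftil yhat η habs
    hfix
end
end

section
/- Assume: (i) ‖φ‖_{∞,1} < ∞; (ii) for every k there exists ŷ†(k) ∈ ℝ^{μ+1} with f̃(0, ŷ†(k), k) = 0; (iii) f̃ is locally approximately linear on the closed s-neighborhood with constants K₁, K₂ > 0; (iv) ‖f̃(0, ŷ(k), k)‖_∞ ≤ s for all k and Σ_{k∈ℤ} ‖f̃(0, ŷ(k), k)‖_∞ < ∞; (v) K₁‖φ‖_{∞,1} < 1; and (vi) ‖φ‖_{∞,1}·K₂·Σ_{k∈ℤ}‖f̃(0, ŷ(k), k)‖_∞ / (1 − ‖φ‖_{∞,1}K₁) ≤ s. Then for any sequence η_{(m)} : ℤ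 → ℝ^n with ‖η_{(m)}‖_{∞,1} ≤ s, the Picard update η_{(m+1)} is well defined (for each k the defining series converges absolutely) and satisfies ‖η_{(m+1)}‖_{∞,1} ≤ s; hence all Picard iterates started from an iterate in the s-ball remain in the locally approximately linear neighborhood. -/
/-! The Picard update is the convolution on `ℤ` of `φ` with the defect
`v j = f̃(η(j-1), ŷ(j-1), j-1) - Ã η(j-1)`, so Young's inequality for `ℓ¹` gives
`‖η_(m+1)‖_{∞,1} ≤ ‖φ‖_{∞,1} ‖v‖_{∞,1}`. Comparing with the equilibrium `f̃(0, ŷ†(j), j) = 0`,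
local approximate linearity bounds `‖v‖_{∞,1} ≤ K₁ ‖η_(m)‖_{∞,1} + K₂ Σ ‖f̃(0, ŷ(k), k)‖_∞`,
and the ball condition (vi) says precisely that `‖φ‖_{∞,1} (K₁ s + K₂ Σ ‖f̃(0, ŷ(k), k)‖_∞) ≤ s`. -/

open Matrix

noncomputable section

/-- The operator norm induced by the vector `∞`-norm: the maximum absolute row sum. -/
def rowSumNorm {m n : Type*} [Fintype m] [Fintype n] (M : Matrix m n ℝ) : ℝ :=
  ⨆ i, ∑ j, |M i j|

lemma rowSumNorm_nonneg {m n : Type*} [Fintype m] [Fintype n] (M : Matrix m n ℝ) :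
    0 ≤ rowSumNorm M :=
  Real.iSup_nonneg fun _ => Finset.sum_nonneg fun _ _ => abs_nonneg _

lemma norm_mulVec_le_rowSumNorm_mul_norm {m n : Type*} [Fintype m] [Fintype n]
    (M : Matrix m n ℝ) (v : n → ℝ) : ‖M *ᵥ v‖ ≤ rowSumNorm M * ‖v‖ := by
  refine (pi_norm_le_iff_of_nonneg (by positivity [rowSumNorm_nonneg M])).2 fun i => ?_
  have h_row : ∑ j, |M i j| ≤ rowSumNorm M :=
    le_ciSup (f := fun i => ∑ j, |M i j|) (Set.finite_range _).bddAbove i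
  calc ‖(M *ᵥ v) i‖ ≤ ∑ j, |M i j| * ‖v‖ := by
        rw [Real.norm_eq_abs, mulVec, dotProduct]
        refine (Finset.abs_sum_le_sum_abs _ _).trans (Finset.sum_le_sum fun j _ => ?_)
        rw [abs_mul, ← Real.norm_eq_abs (v j)]
        exact mul_le_mul_of_nonneg_left (norm_le_pi_norm v j) (abs_nonneg _)
    _ = (∑ j, |M i j|) * ‖v‖ := Finset.sum_mul .. |>.symm
    _ ≤ rowSumNorm M * ‖v‖ := mul_le_mul_of_nonneg_right h_row (norm_nonneg v)

section Convolution

variable {G : Type*} [AddCommGroup G] {a b : G → ℝ}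

lemma hasSum_prod_conv_of_nonneg (ha : Summable a) (hb : Summable b) (ha0 : 0 ≤ a) (hb0 : 0 ≤ b) :
    HasSum (fun p : G × G => a (p.1 - p.2) * b p.2) ((∑' k, a k) * ∑' j, b j) := by
  let shear : G × G ≃ G × G :=
    { toFun := fun p => (p.1 + p.2, p.2)
      invFun := fun p => (p.1 - p.2, p.2)
      left_inv := fun p => by simp
      right_inv := fun p => by simp }
  have h := ha.hasSum.mul hb.hasSum (ha.mul_of_nonneg hb ha0 hb0)
  rw [← shear.hasSum_iff]
  simpa [shear, Function.comp_def] using h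

lemma summable_conv_of_nonneg (ha : Summable a) (hb : Summable b) (ha0 : 0 ≤ a) (hb0 : 0 ≤ b)
    (k : G) : Summable fun j => a (k - j) * b j :=
  ((summable_prod_of_nonneg fun _ => mul_nonneg (ha0 _) (hb0 _)).1
    (hasSum_prod_conv_of_nonneg ha hb ha0 hb0).summable).1 k

lemma hasSum_conv_of_nonneg (ha : Summable a) (hb : Summable b) (ha0 : 0 ≤ a) (hb0 : 0 ≤ b) :
    HasSum (fun k => ∑' j, a (k - j) * b j) ((∑' k, a k) * ∑' j, b j) :=
  (hasSum_prod_conv_of_nonneg ha hb ha0 hb0).prod_fiberwise fun k =>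
    (summable_conv_of_nonneg ha hb ha0 hb0 k).hasSum

end Convolution

section MatrixConvolution

variable {G m n : Type*} [AddCommGroup G] [Fintype m] [Fintype n]
  {Φ : G → Matrix m n ℝ} {u : G → n → ℝ}

lemma summable_norm_mulVec_conv (hΦ : Summable fun k => rowSumNorm (Φ k))
    (hu : Summable fun j => ‖u j‖) (k : G) : Summable fun j => ‖Φ (k - j) *ᵥ u j‖ :=
  .of_nonneg_of_le (fun _ => norm_nonneg _) (fun _ => norm_mulVec_le_rowSumNorm_mul_norm _ _)
    (summable_conv_of_nonneg hΦ hu (fun _ => rowSumNorm_nonneg _) (fun _ => norm_nonneg _) k)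

lemma norm_tsum_mulVec_conv_le (hΦ : Summable fun k => rowSumNorm (Φ k))
    (hu : Summable fun j => ‖u j‖) (k : G) :
    ‖∑' j, Φ (k - j) *ᵥ u j‖ ≤ ∑' j, rowSumNorm (Φ (k - j)) * ‖u j‖ :=
  (norm_tsum_le_tsum_norm (summable_norm_mulVec_conv hΦ hu k)).trans <|
    (summable_norm_mulVec_conv hΦ hu k).tsum_le_tsum
      (fun _ => norm_mulVec_le_rowSumNorm_mul_norm _ _)
      (summable_conv_of_nonneg hΦ hu (fun _ => rowSumNorm_nonneg _) (fun _ => norm_nonneg _) k)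

lemma summable_norm_tsum_mulVec_conv (hΦ : Summable fun k => rowSumNorm (Φ k))
    (hu : Summable fun j => ‖u j‖) : Summable fun k => ‖∑' j, Φ (k - j) *ᵥ u j‖ :=
  .of_nonneg_of_le (fun _ => norm_nonneg _) (norm_tsum_mulVec_conv_le hΦ hu)
    (hasSum_conv_of_nonneg hΦ hu (fun _ => rowSumNorm_nonneg _) (fun _ => norm_nonneg _)).summable

lemma tsum_norm_tsum_mulVec_conv_le (hΦ : Summable fun k => rowSumNorm (Φ k))
    (hu : Summable fun j => ‖u j‖) :
    ∑' k, ‖∑' j, Φ (k - j) *ᵥ u j‖ ≤ (∑' k, rowSumNorm (Φ k)) * ∑' j, ‖u j‖ := by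
  have h_conv := hasSum_conv_of_nonneg hΦ hu (fun _ => rowSumNorm_nonneg _)
    (fun _ => norm_nonneg _)
  rw [← h_conv.tsum_eq]
  exact (summable_norm_tsum_mulVec_conv hΦ hu).tsum_le_tsum (norm_tsum_mulVec_conv_le hΦ hu)
    h_conv.summable

end MatrixConvolution

def IsLocallyApproxLinear {m Y : Type*} [Fintype m] (f : (m → ℝ) → Y → m → ℝ)
    (A : Matrix m m ℝ) (s K₁ K₂ : ℝ) : Prop :=
  ∀ (a b : m → ℝ) (ya yb : Y), ‖a‖ ≤ s → ‖b‖ ≤ s → ‖f 0 ya‖ ≤ s → ‖f 0 yb‖ ≤ s →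
    ‖(f a ya - A *ᵥ a) - (f b yb - A *ᵥ b)‖ ≤ K₁ * ‖a - b‖ + K₂ * ‖f 0 ya - f 0 yb‖

lemma IsLocallyApproxLinear.norm_sub_mulVec_le {m Y : Type*} [Fintype m]
    {f : (m → ℝ) → Y → m → ℝ} {A : Matrix m m ℝ} {s K₁ K₂ : ℝ}
    (hf : IsLocallyApproxLinear f A s K₁ K₂) {ydag : Y} (hdag : f 0 ydag = 0)
    {x : m → ℝ} {y : Y} (hx : ‖x‖ ≤ s) (hy : ‖f 0 y‖ ≤ s) :
    ‖f x y - A *ᵥ x‖ ≤ K₁ * ‖x‖ + K₂ * ‖f 0 y‖ := by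
  have hs : 0 ≤ s := (norm_nonneg _).trans hy
  simpa [hdag] using hf x 0 y ydag hx (by simpa using hs) hy (by simpa [hdag] using hs)

section Defect

variable {ι m Y : Type*} [Fintype m] {f : (m → ℝ) → Y → ι → m → ℝ} {A : Matrix m m ℝ}
  {s K₁ K₂ : ℝ} {η : ι → m → ℝ} {y : ι → Y}

lemma norm_defect_le (hf : ∀ k, IsLocallyApproxLinear (fun a y => f a y k) A s K₁ K₂)
    (hdag : ∀ k, ∃ ydag, f 0 ydag k = 0) (hη_sum : Summable fun k => ‖η k‖)
    (hη : ∑' k, ‖η k‖ ≤ s) (hy : ∀ k, ‖f 0 (y k) k‖ ≤ s) (k : ι) :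
    ‖f (η k) (y k) k - A *ᵥ η k‖ ≤ K₁ * ‖η k‖ + K₂ * ‖f 0 (y k) k‖ :=
  let ⟨_, hydag⟩ := hdag k
  (hf k).norm_sub_mulVec_le hydag ((hη_sum.le_tsum k fun _ _ => norm_nonneg _).trans hη) (hy k)

lemma summable_norm_defect (hf : ∀ k, IsLocallyApproxLinear (fun a y => f a y k) A s K₁ K₂)
    (hdag : ∀ k, ∃ ydag, f 0 ydag k = 0) (hη_sum : Summable fun k => ‖η k‖)
    (hη : ∑' k, ‖η k‖ ≤ s) (hy : ∀ k, ‖f 0 (y k) k‖ ≤ s)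
    (hy_sum : Summable fun k => ‖f 0 (y k) k‖) :
    Summable fun k => ‖f (η k) (y k) k - A *ᵥ η k‖ :=
  .of_nonneg_of_le (fun _ => norm_nonneg _) (norm_defect_le hf hdag hη_sum hη hy)
    ((hη_sum.mul_left K₁).add (hy_sum.mul_left K₂))

lemma tsum_norm_defect_le (hf : ∀ k, IsLocallyApproxLinear (fun a y => f a y k) A s K₁ K₂)
    (hdag : ∀ k, ∃ ydag, f 0 ydag k = 0) (hη_sum : Summable fun k => ‖η k‖)
    (hη : ∑' k, ‖η k‖ ≤ s) (hy : ∀ k, ‖f 0 (y k) k‖ ≤ s)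
    (hy_sum : Summable fun k => ‖f 0 (y k) k‖) :
    ∑' k, ‖f (η k) (y k) k - A *ᵥ η k‖ ≤ K₁ * ∑' k, ‖η k‖ + K₂ * ∑' k, ‖f 0 (y k) k‖ := by
  rw [← tsum_mul_left, ← tsum_mul_left, ← (hη_sum.mul_left K₁).tsum_add (hy_sum.mul_left K₂)]
  exact (summable_norm_defect hf hdag hη_sum hη hy hy_sum).tsum_le_tsum
    (norm_defect_le hf hdag hη_sum hη hy) ((hη_sum.mul_left K₁).add (hy_sum.mul_left K₂))

end Defect

theorem picard_iterates_remain_in_ball_general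
    (ns nu μ : ℕ)
    (As : Matrix (Fin ns) (Fin ns) ℝ) (Au : Matrix (Fin nu) (Fin nu) ℝ)
    (Atil : Matrix (Fin ns ⊕ Fin nu) (Fin ns ⊕ Fin nu) ℝ)
    (ftil : (Fin ns ⊕ Fin nu → ℝ) → (Fin (μ+1) → ℝ) → ℤ → (Fin ns ⊕ Fin nu → ℝ))
    (yhat : ℤ → (Fin (μ+1) → ℝ))
    (s K₁ K₂ : ℝ) (hK₁ : 0 < K₁)
    -- (i) ‖φ‖_{∞,1} < ∞
    (hφsum : Summable fun k : ℤ => rowSumNorm (stabPhi As Au k))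
    -- (ii) for every k there is ŷ†(k) with f̃(0, ŷ†(k), k) = 0
    (hdag : ∀ k : ℤ, ∃ ydag : Fin (μ+1) → ℝ, ftil 0 ydag k = 0)
    -- (iii) local approximate linearity on the closed s-neighborhood
    (hLAL : ∀ (k : ℤ) (a b : Fin ns ⊕ Fin nu → ℝ) (ya yb : Fin (μ+1) → ℝ),
      ‖a‖ ≤ s → ‖b‖ ≤ s → ‖ftil 0 ya k‖ ≤ s → ‖ftil 0 yb k‖ ≤ s →
      ‖(ftil a ya k - Atil.mulVec a) - (ftil b yb k - Atil.mulVec b)‖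
        ≤ K₁ * ‖a - b‖ + K₂ * ‖ftil 0 ya k - ftil 0 yb k‖)
    -- (iv) ‖f̃(0, ŷ(k), k)‖_∞ ≤ s for all k and summability of these norms
    (hfbnd : ∀ k : ℤ, ‖ftil 0 (yhat k) k‖ ≤ s)
    (hfsum : Summable fun k : ℤ => ‖ftil 0 (yhat k) k‖)
    -- (v) K₁‖φ‖_{∞,1} < 1
    (hcontr : K₁ * (∑' k : ℤ, rowSumNorm (stabPhi As Au k)) < 1)
    -- (vi) the ball condition
    (hball : (∑' k : ℤ, rowSumNorm (stabPhi As Au k)) * K₂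
        * (∑' k : ℤ, ‖ftil 0 (yhat k) k‖)
        / (1 - (∑' k : ℤ, rowSumNorm (stabPhi As Au k)) * K₁) ≤ s)
    -- the current iterate with ‖η_(m)‖_{∞,1} ≤ s
    (ηm : ℤ → (Fin ns ⊕ Fin nu → ℝ))
    (hηmsum : Summable fun k : ℤ => ‖ηm k‖)
    (hηm : (∑' k : ℤ, ‖ηm k‖) ≤ s)
    -- the Picard update
    (ηm1 : ℤ → (Fin ns ⊕ Fin nu → ℝ))
    (hηm1 : ∀ k : ℤ, ηm1 k = ∑' j : ℤ, (stabPhi As Au (k - j)).mulVec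
        (ftil (ηm (j-1)) (yhat (j-1)) (j-1) - Atil.mulVec (ηm (j-1)))) :
    (∀ k : ℤ, Summable fun j : ℤ => ‖(stabPhi As Au (k - j)).mulVec
        (ftil (ηm (j-1)) (yhat (j-1)) (j-1) - Atil.mulVec (ηm (j-1)))‖) ∧
    (Summable fun k : ℤ => ‖ηm1 k‖) ∧ (∑' k : ℤ, ‖ηm1 k‖) ≤ s := by
  set A := ∑' k, rowSumNorm (stabPhi As Au k)
  set v : ℤ → Fin ns ⊕ Fin nu → ℝ := fun j => ftil (ηm j) (yhat j) j - Atil *ᵥ ηm j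
  have hv : Summable fun j => ‖v j‖ := summable_norm_defect hLAL hdag hηmsum hηm hfbnd hfsum
  have hv_shift : Summable fun j => ‖v (j - 1)‖ := hv.comp_injective sub_left_injective
  have htsum_shift : ∑' j, ‖v (j - 1)‖ = ∑' j, ‖v j‖ :=
    (Equiv.subRight (1 : ℤ)).tsum_eq fun j => ‖v j‖
  have hηm1_eq : ηm1 = fun k => ∑' j, stabPhi As Au (k - j) *ᵥ v (j - 1) := funext hηm1
  have hA : 0 ≤ A := tsum_nonneg fun _ => rowSumNorm_nonneg _
  have h_ball : A * K₂ * ∑' k, ‖ftil 0 (yhat k) k‖ ≤ s * (1 - A * K₁) :=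
    (div_le_iff₀ (by linarith)).1 hball
  refine ⟨summable_norm_mulVec_conv hφsum hv_shift,
    hηm1_eq ▸ summable_norm_tsum_mulVec_conv hφsum hv_shift, ?_⟩
  calc ∑' k, ‖ηm1 k‖ ≤ A * ∑' j, ‖v (j - 1)‖ :=
        hηm1_eq ▸ tsum_norm_tsum_mulVec_conv_le hφsum hv_shift
    _ = A * ∑' j, ‖v j‖ := by rw [htsum_shift]
    _ ≤ A * (K₁ * ∑' k, ‖ηm k‖ + K₂ * ∑' k, ‖ftil 0 (yhat k) k‖) :=
        mul_le_mul_of_nonneg_left (tsum_norm_defect_le hLAL hdag hηmsum hηm hfbnd hfsum) hA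
    _ ≤ s := by nlinarith [mul_nonneg hA hK₁.le]

/-- Picard iterates remain in the `s`-ball of the locally approximately linear
neighborhood: if `‖η_(m)‖_{∞,1} ≤ s` then the Picard update is well defined
(its defining series converges absolutely at every time) and `‖η_(m+1)‖_{∞,1} ≤ s`. -/
theorem picard_iterates_remain_in_ball
    (ns nu μ : ℕ) (hμ : 1 ≤ μ)
    (As : Matrix (Fin ns) (Fin ns) ℝ) (Au : Matrix (Fin nu) (Fin nu) ℝ)
    (hAu : IsUnit Au.det)
    (Atil : Matrix (Fin ns ⊕ Fin nu) (Fin ns ⊕ Fin nu) ℝ)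
    (hAtil : Atil = Matrix.fromBlocks As 0 0 Au)
    (ftil : (Fin ns ⊕ Fin nu → ℝ) → (Fin (μ+1) → ℝ) → ℤ → (Fin ns ⊕ Fin nu → ℝ))
    (yhat : ℤ → (Fin (μ+1) → ℝ))
    (s K₁ K₂ : ℝ) (hs : 0 < s) (hK₁ : 0 < K₁) (hK₂ : 0 < K₂)
    -- (i) ‖φ‖_{∞,1} < ∞
    (hφsum : Summable fun k : ℤ => rowSumNorm (stabPhi As Au k))
    -- (ii) for every k there is ŷ†(k) with f̃(0, ŷ†(k), k) = 0
    (hdag : ∀ k : ℤ, ∃ ydag : Fin (μ+1) → ℝ, ftil 0 ydag k = 0)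
    -- (iii) local approximate linearity on the closed s-neighborhood
    (hLAL : ∀ (k : ℤ) (a b : Fin ns ⊕ Fin nu → ℝ) (ya yb : Fin (μ+1) → ℝ),
      ‖a‖ ≤ s → ‖b‖ ≤ s → ‖ftil 0 ya k‖ ≤ s → ‖ftil 0 yb k‖ ≤ s →
      ‖(ftil a ya k - Atil.mulVec a) - (ftil b yb k - Atil.mulVec b)‖
        ≤ K₁ * ‖a - b‖ + K₂ * ‖ftil 0 ya k - ftil 0 yb k‖)
    -- (iv) ‖f̃(0, ŷ(k), k)‖_∞ ≤ s for all k and summability of these norms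
    (hfbnd : ∀ k : ℤ, ‖ftil 0 (yhat k) k‖ ≤ s)
    (hfsum : Summable fun k : ℤ => ‖ftil 0 (yhat k) k‖)
    -- (v) K₁‖φ‖_{∞,1} < 1
    (hcontr : K₁ * (∑' k : ℤ, rowSumNorm (stabPhi As Au k)) < 1)
    -- (vi) the ball condition
    (hball : (∑' k : ℤ, rowSumNorm (stabPhi As Au k)) * K₂
        * (∑' k : ℤ, ‖ftil 0 (yhat k) k‖)
        / (1 - (∑' k : ℤ, rowSumNorm (stabPhi As Au k)) * K₁) ≤ s)
    -- the current iterate with ‖η_(m)‖_{∞,1} ≤ s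
    (ηm : ℤ → (Fin ns ⊕ Fin nu → ℝ))
    (hηmsum : Summable fun k : ℤ => ‖ηm k‖)
    (hηm : (∑' k : ℤ, ‖ηm k‖) ≤ s)
    -- the Picard update
    (ηm1 : ℤ → (Fin ns ⊕ Fin nu → ℝ))
    (hηm1 : ∀ k : ℤ, ηm1 k = ∑' j : ℤ, (stabPhi As Au (k - j)).mulVec
        (ftil (ηm (j-1)) (yhat (j-1)) (j-1) - Atil.mulVec (ηm (j-1)))) :
    (∀ k : ℤ, Summable fun j : ℤ => ‖(stabPhi As Au (k - j)).mulVec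
        (ftil (ηm (j-1)) (yhat (j-1)) (j-1) - Atil.mulVec (ηm (j-1)))‖) ∧
    (Summable fun k : ℤ => ‖ηm1 k‖) ∧ (∑' k : ℤ, ‖ηm1 k‖) ≤ s :=
  picard_iterates_remain_in_ball_general ns nu μ As Au Atil ftil yhat s K₁ K₂ hK₁ hφsum hdag hLAL
    hfbnd hfsum hcontr hball ηm hηmsum hηm ηm1 hηm1
end
end

section
/- (General inverse of a PWA system of relative degree ν ≥ 1.) Suppose all component feedthrough terms vanish, D_{q,k} = 0 for all q, k. Fix ν ≥ 1 and a time k, and along a trajectory define 𝒞_k := 𝐂_{k+ν}·(∏_{m=0}^{ν−1} 𝐀_{k+m}), 𝒟_k := 𝐂_{k+ν}·(∏_{m=1}^{ν−1} 𝐀_{k+m})·𝐁_k, 𝒢_k := 𝐂_{k+ν}·Σ_{s=0}^{ν−1} (∏_{m=s+1}^{ν−1} 𝐀_{k+m})·𝐅_{k+s} + 𝐆_{k+ν}, and Ψ_k := 𝐂_{k+ν}·Σ_{s=1}^{ν−1} (∏_{m=s+1}^{ν−1} 𝐀_{k+m})·𝐁_{k+s}·u_{k+s}. If 𝒟_k ≠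 0, then the trajectory satisfies the (anticausal) inverse-system equations u_k = 𝒟_k^{-1}·( y_{k+ν} − 𝒞_k x_k − 𝒢_k − Ψ_k ) and x_{k+1} = (𝐀_k − 𝐁_k𝒟_k^{-1}𝒞_k)·x_k + 𝐁_k𝒟_k^{-1}·y_{k+ν} + 𝐅_k − 𝐁_k𝒟_k^{-1}·(𝒢_k + Ψ_k). -/
/-! Unrolling the state recursion over the `ν` steps from `k` to `k + ν` (variation of constants)
and reading off the output with `D = 0` gives `y_{k+ν} = 𝒞_k x_k + 𝒟_k u_k + 𝒢_k + Ψ_k`. The input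
`u_k` enters only through `𝒟_k`, so for `𝒟_k ≠ 0` it can be solved for, and substituting it into
`x_{k+1} = 𝐀_k x_k + 𝐁_k u_k + 𝐅_k` gives the inverse state equation. -/

open Matrix

noncomputable section

/-- Heaviside step function with the convention `H 0 = 1`. -/
def heaviside (t : ℝ) : ℝ := if 0 ≤ t then 1 else 0

/-- `aProd A k a b = A (k+b-1) * ⋯ * A (k+a)`, the ordered product `∏_{m=a}^{b-1} A_{k+m}`
with the factor of largest index leftmost; an empty product (`b ≤ a`) is the identity. -/
def aProd {n : ℕ} (A : ℤ → Matrix (Fin n) (Fin n) ℝ) (k : ℤ) (a : ℕ) :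
    ℕ → Matrix (Fin n) (Fin n) ℝ
  | 0 => 1
  | (b+1) => if b + 1 ≤ a then 1 else A (k + b) * aProd A k a b

section aProd

variable {n : ℕ} (A : ℤ → Matrix (Fin n) (Fin n) ℝ) (k : ℤ)

@[simp]
lemma aProd_self (a : ℕ) : aProd A k a a = 1 := by
  cases a <;> simp [aProd]

lemma aProd_succ {a b : ℕ} (hab : a ≤ b) : aProd A k a (b + 1) = A (k + b) * aProd A k a b := by
  rw [aProd, if_neg (by omega)]

lemma variation_of_constants (w x : ℤ → Fin n → ℝ) (hx : ∀ m, x (m + 1) = A m *ᵥ x m + w m)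
    (j : ℕ) :
    x (k + j) = aProd A k 0 j *ᵥ x k + ∑ s ∈ Finset.range j, aProd A k (s + 1) j *ᵥ w (k + s) := by
  induction j with
  | zero => simp
  | succ j ih =>
    have hsum : ∀ s ∈ Finset.range j,
        aProd A k (s + 1) (j + 1) *ᵥ w (k + s)
          = A (k + j) *ᵥ (aProd A k (s + 1) j *ᵥ w (k + s)) := by
      intro s hs
      rw [aProd_succ A k (Finset.mem_range.mp hs), mulVec_mulVec]
    rw [Nat.cast_succ, ← add_assoc, hx, ih, Finset.sum_range_succ, Finset.sum_congr rfl hsum,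
      aProd_self, one_mulVec, aProd_succ A k (Nat.zero_le j), ← mulVec_mulVec, ← mulVec_sum,
      mulVec_add, add_assoc]

end aProd

lemma output_eq_unrolled {n : ℕ} {A : ℤ → Matrix (Fin n) (Fin n) ℝ} {B F C x : ℤ → Fin n → ℝ}
    {G u y : ℤ → ℝ} (hx : ∀ m, x (m + 1) = A m *ᵥ x m + u m • B m + F m)
    (hy : ∀ m, y m = C m ⬝ᵥ x m + G m) {ν : ℕ} (hν : 1 ≤ ν) (k : ℤ) :
    y (k + ν) = (C (k + ν) ᵥ* aProd A k 0 ν) ⬝ᵥ x k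
      + (C (k + ν) ⬝ᵥ aProd A k 1 ν *ᵥ B k) * u k
      + ((C (k + ν) ⬝ᵥ ∑ s ∈ Finset.range ν, aProd A k (s + 1) ν *ᵥ F (k + s)) + G (k + ν)
        + ∑ s ∈ Finset.Ico 1 ν, (C (k + ν) ⬝ᵥ aProd A k (s + 1) ν *ᵥ B (k + s)) * u (k + s)) := by
  have hx' : ∀ m, x (m + 1) = A m *ᵥ x m + (u m • B m + F m) := fun m => by
    rw [hx, add_assoc]
  have hinput : ∑ s ∈ Finset.range ν, (C (k + ν) ⬝ᵥ aProd A k (s + 1) ν *ᵥ B (k + s)) * u (k + s)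
      = (C (k + ν) ⬝ᵥ aProd A k 1 ν *ᵥ B k) * u k
        + ∑ s ∈ Finset.Ico 1 ν, (C (k + ν) ⬝ᵥ aProd A k (s + 1) ν *ᵥ B (k + s)) * u (k + s) := by
    rw [Finset.range_eq_Ico, Finset.sum_eq_sum_Ico_succ_bot hν]
    simp
  rw [hy, variation_of_constants A k _ x hx' ν, dotProduct_add, dotProduct_mulVec,
    dotProduct_sum, dotProduct_sum]
  simp only [mulVec_add, mulVec_smul, dotProduct_add, dotProduct_smul, smul_eq_mul,
    Finset.sum_add_distrib]
  simp only [mul_comm (u _)]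
  rw [hinput]
  ring

lemma inverse_system_of_output_eq {ι K : Type*} [Fintype ι] [Field K] (A : Matrix ι ι K)
    (B F : ι → K) {c x : ι → K} {d g u y : K} (hd : d ≠ 0) (hy : y = c ⬝ᵥ x + d * u + g) :
    u = d⁻¹ * (y - c ⬝ᵥ x - g) ∧
      A *ᵥ x + u • B + F
        = (A - d⁻¹ • vecMulVec B c) *ᵥ x + (d⁻¹ * y) • B + (F - (d⁻¹ * g) • B) := by
  have hu : u = d⁻¹ * (y - c ⬝ᵥ x - g) := by
    rw [hy]; field_simp; ring
  refine ⟨hu, ?_⟩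
  rw [sub_mulVec, smul_mulVec, vecMulVec_mulVec, hu]
  ext i
  simp only [Pi.add_apply, Pi.sub_apply, Pi.smul_apply, smul_eq_mul, op_smul_eq_smul]
  ring

theorem pwa_general_inverse_general
    (n L : ℕ)
    (A : Fin L → ℤ → Matrix (Fin n) (Fin n) ℝ)
    (B F : Fin L → ℤ → (Fin n → ℝ))
    (C : Fin L → ℤ → (Fin n → ℝ))
    (D G : Fin L → ℤ → ℝ)
    (loc : (Fin n → ℝ) → Fin L)
    -- all component feedthrough terms vanish
    (hD0 : ∀ (q : Fin L) (k : ℤ), D q k = 0)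
    -- a trajectory of the PWA system
    (x : ℤ → (Fin n → ℝ)) (u y : ℤ → ℝ)
    (hx : ∀ k : ℤ, x (k+1) = (A (loc (x k)) k).mulVec (x k)
        + u k • B (loc (x k)) k + F (loc (x k)) k)
    (hy : ∀ k : ℤ, y k = C (loc (x k)) k ⬝ᵥ x k + D (loc (x k)) k * u k + G (loc (x k)) k)
    -- active-location (bold) quantities along the trajectory
    (boldA : ℤ → Matrix (Fin n) (Fin n) ℝ) (hboldA : ∀ k, boldA k = A (loc (x k)) k)
    (boldB : ℤ → (Fin n → ℝ)) (hboldB : ∀ k, boldB k = B (loc (x k)) k)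
    (boldF : ℤ → (Fin n → ℝ)) (hboldF : ∀ k, boldF k = F (loc (x k)) k)
    (boldC : ℤ → (Fin n → ℝ)) (hboldC : ∀ k, boldC k = C (loc (x k)) k)
    (boldG : ℤ → ℝ) (hboldG : ∀ k, boldG k = G (loc (x k)) k)
    -- fix the relative degree ν ≥ 1 and the time k
    (ν : ℕ) (hν : 1 ≤ ν) (k : ℤ)
    -- the calligraphic quantities
    (𝒞 : Fin n → ℝ) (h𝒞 : 𝒞 = boldC (k + ν) ᵥ* aProd boldA k 0 ν)
    (𝒟 : ℝ) (h𝒟 : 𝒟 = boldC (k + ν) ⬝ᵥ (aProd boldA k 1 ν).mulVec (boldB k))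
    (𝒢 : ℝ) (h𝒢 : 𝒢 = boldC (k + ν) ⬝ᵥ (∑ s ∈ Finset.range ν,
        (aProd boldA k (s+1) ν).mulVec (boldF (k + s))) + boldG (k + ν))
    (Ψ : ℝ) (hΨ : Ψ = ∑ s ∈ Finset.Ico 1 ν,
        (boldC (k + ν) ⬝ᵥ (aProd boldA k (s+1) ν).mulVec (boldB (k + s))) * u (k + s))
    (h𝒟ne : 𝒟 ≠ 0) :
    -- the inverse output equation
    u k = 𝒟⁻¹ * (y (k + ν) - 𝒞 ⬝ᵥ x k - 𝒢 - Ψ) ∧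
    -- the inverse state transition equation
    x (k+1) = (boldA k - 𝒟⁻¹ • vecMulVec (boldB k) 𝒞).mulVec (x k)
        + (𝒟⁻¹ * y (k + ν)) • boldB k
        + (boldF k - (𝒟⁻¹ * (𝒢 + Ψ)) • boldB k) := by
  have hxbold : ∀ m, x (m + 1) = boldA m *ᵥ x m + u m • boldB m + boldF m := fun m => by
    rw [hboldA, hboldB, hboldF]; exact hx m
  have hybold : ∀ m, y m = boldC m ⬝ᵥ x m + boldG m := fun m => by
    rw [hy, hboldC, hboldG, hD0, zero_mul, add_zero]
  have hkey := output_eq_unrolled hxbold hybold hν k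
  rw [← h𝒞, ← h𝒟, ← h𝒢, ← hΨ] at hkey
  obtain ⟨hu, hstate⟩ := inverse_system_of_output_eq (boldA k) (boldB k) (boldF k) h𝒟ne hkey
  exact ⟨hu.trans (by ring), (hxbold k).trans hstate⟩

/-- General inverse of a PWA system of relative degree `ν ≥ 1`: if `𝒟_k ≠ 0`, any
trajectory satisfies the (anticausal, implicit) inverse-system equations. -/
theorem pwa_general_inverse
    (n p L : ℕ)
    (A : Fin L → ℤ → Matrix (Fin n) (Fin n) ℝ)
    (B F : Fin L → ℤ → (Fin n → ℝ))
    (C : Fin L → ℤ → (Fin n → ℝ))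
    (D G : Fin L → ℤ → ℝ)
    (P : Matrix (Fin p) (Fin n) ℝ) (β : Fin p → ℝ)
    (Δstar : Fin L → Set (Fin p → ℝ))
    (hdisj : Pairwise fun q q' : Fin L => Disjoint (Δstar q) (Δstar q'))
    (δ : (Fin n → ℝ) → (Fin p → ℝ))
    (hδ : ∀ xv, δ xv = fun i => heaviside ((P.mulVec xv) i - β i))
    (loc : (Fin n → ℝ) → Fin L)
    (hloc : ∀ xv, δ xv ∈ Δstar (loc xv))
    -- all component feedthrough terms vanish
    (hD0 : ∀ (q : Fin L) (k : ℤ), D q k = 0)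
    -- a trajectory of the PWA system
    (x : ℤ → (Fin n → ℝ)) (u y : ℤ → ℝ)
    (hx : ∀ k : ℤ, x (k+1) = (A (loc (x k)) k).mulVec (x k)
        + u k • B (loc (x k)) k + F (loc (x k)) k)
    (hy : ∀ k : ℤ, y k = C (loc (x k)) k ⬝ᵥ x k + D (loc (x k)) k * u k + G (loc (x k)) k)
    -- active-location (bold) quantities along the trajectory
    (boldA : ℤ → Matrix (Fin n) (Fin n) ℝ) (hboldA : ∀ k, boldA k = A (loc (x k)) k)
    (boldB : ℤ → (Fin n → ℝ)) (hboldB : ∀ k, boldB k = B (loc (x k)) k)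
    (boldF : ℤ → (Fin n → ℝ)) (hboldF : ∀ k, boldF k = F (loc (x k)) k)
    (boldC : ℤ → (Fin n → ℝ)) (hboldC : ∀ k, boldC k = C (loc (x k)) k)
    (boldG : ℤ → ℝ) (hboldG : ∀ k, boldG k = G (loc (x k)) k)
    -- fix the relative degree ν ≥ 1 and the time k
    (ν : ℕ) (hν : 1 ≤ ν) (k : ℤ)
    -- the calligraphic quantities
    (𝒞 : Fin n → ℝ) (h𝒞 : 𝒞 = boldC (k + ν) ᵥ* aProd boldA k 0 ν)
    (𝒟 : ℝ) (h𝒟 : 𝒟 = boldC (k + ν) ⬝ᵥ (aProd boldA k 1 ν).mulVec (boldB k))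
    (𝒢 : ℝ) (h𝒢 : 𝒢 = boldC (k + ν) ⬝ᵥ (∑ s ∈ Finset.range ν,
        (aProd boldA k (s+1) ν).mulVec (boldF (k + s))) + boldG (k + ν))
    (Ψ : ℝ) (hΨ : Ψ = ∑ s ∈ Finset.Ico 1 ν,
        (boldC (k + ν) ⬝ᵥ (aProd boldA k (s+1) ν).mulVec (boldB (k + s))) * u (k + s))
    (h𝒟ne : 𝒟 ≠ 0) :
    -- the inverse output equation
    u k = 𝒟⁻¹ * (y (k + ν) - 𝒞 ⬝ᵥ x k - 𝒢 - Ψ) ∧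
    -- the inverse state transition equation
    x (k+1) = (boldA k - 𝒟⁻¹ • vecMulVec (boldB k) 𝒞).mulVec (x k)
        + (𝒟⁻¹ * y (k + ν)) • boldB k
        + (boldF k - (𝒟⁻¹ * (𝒢 + Ψ)) • boldB k) :=
  pwa_general_inverse_general n L A B F C D G loc hD0 x u y hx hy boldA hboldA boldB hboldB boldF
    hboldF boldC hboldC boldG hboldG ν hν k 𝒞 h𝒞 𝒟 h𝒟 𝒢 h𝒢 Ψ hΨ h𝒟ne
end
end

section
/- (Non-uniqueness of PWA system inversion for relative degree ≥ 1.) Consider the time-invariant PWA system on ℝ² with two locations: A_1 = [[0,1],[0,0]], A_2 = [[0,2],[0,0]], B_1 = B_2 = (0,1)ᵀ, C_1 = C_2 = [1,0], and all F, D, G terms zero; switching is given by P = [0,1], β = 1.5, Δ*_1 = {1}, Δ*_2 = {0}, so location 1 is active when the second state coordinate is ≥ 1.5 and location 2 otherwise. Then from the state x_k = (0,0)ᵀ, and for any value of the next input u_{k+1}: the input u_k = 2 yields x_{k+1} = (0,2)ᵀ (location 1 active) and output y_{k+2} = 2, while the distinct input u_k = 1 yields x_{k+1} = (0,1)ᵀ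 (location 2 active) and also output y_{k+2} = 2. Hence the map u_k ↦ y_{k+2} is not injective, and the inverse of a PWA system with relative degree ≥ 1 cannot in general be expressed by an explicit formula. -/
/-!
From the origin the state after one step is `(0, u_k)`, and the output two steps later is
`u_k` in location 1 but `2 u_k` in location 2, so `u_k = 2` and `u_k = 1` collide.
-/

open Matrix

noncomputable section

lemma heaviside_eq_one_iff {t : ℝ} : heaviside t = 1 ↔ 0 ≤ t := by
  unfold heaviside
  split_ifs <;> simp_all

lemma heaviside_of_neg {t : ℝ} (ht : t < 0) : heaviside t = 0 :=
  if_neg (not_le.2 ht)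

lemma mulVec_strictUpper_two (a p q : ℝ) : !![0, a; 0, 0] *ᵥ ![p, q] = ![a * q, 0] := by
  ext i
  fin_cases i <;> simp [mul_comm]

/-- Non-uniqueness of PWA system inversion for relative degree ≥ 1: in the two-location
example with `A₁ = [[0,1],[0,0]]`, `A₂ = [[0,2],[0,0]]`, `B = (0,1)ᵀ`, `C = [1,0]`,
switching on the second state coordinate at threshold `3/2`, both inputs `u_k = 2`
(location 1) and `u_k = 1` (location 2) from `x_k = 0` give previewed output
`y_{k+2} = 2`, so the map `u_k ↦ y_{k+2}` is not injective. -/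
theorem pwa_inverse_nonuniqueness
    (A1 A2 : Matrix (Fin 2) (Fin 2) ℝ)
    (hA1 : A1 = !![0, 1; 0, 0]) (hA2 : A2 = !![0, 2; 0, 0])
    (Bv Cv : Fin 2 → ℝ)
    (hB : Bv = ![0, 1]) (hC : Cv = ![1, 0])
    -- one step of the PWA dynamics with the active-location matrix
    (step : (Fin 2 → ℝ) → ℝ → (Fin 2 → ℝ))
    (hstep : ∀ (xv : Fin 2 → ℝ) (uv : ℝ),
      step xv uv = (if heaviside (xv 1 - 3/2) = 1 then A1 else A2).mulVec xv + uv • Bv) :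
    -- input u_k = 2 yields x_{k+1} = (0,2)ᵀ with location 1 active
    step 0 2 = ![0, 2] ∧ heaviside ((step 0 2) 1 - 3/2) = 1 ∧
    -- input u_k = 1 yields x_{k+1} = (0,1)ᵀ with location 2 active
    step 0 1 = ![0, 1] ∧ heaviside ((step 0 1) 1 - 3/2) = 0 ∧
    -- both yield output y_{k+2} = 2, for any value of the next input
    (∀ u' : ℝ, Cv ⬝ᵥ step (step 0 2) u' = 2) ∧
    (∀ u' : ℝ, Cv ⬝ᵥ step (step 0 1) u' = 2) ∧
    -- hence the map u_k ↦ y_{k+2} is not injective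
    (∀ u' : ℝ, ¬ Function.Injective fun uk : ℝ => Cv ⬝ᵥ step (step 0 uk) u') := by
  subst hA1 hA2 hB hC
  have hfirst (u : ℝ) : step 0 u = ![0, u] := by
    rw [hstep, mulVec_zero, zero_add]
    ext i
    fin_cases i <;> simp
  have houtput (u u' : ℝ) :
      ![1, 0] ⬝ᵥ step ![0, u] u' = if 3/2 ≤ u then u else 2 * u := by
    rw [hstep]
    simp only [cons_val_one, cons_val_zero, heaviside_eq_one_iff, sub_nonneg]
    split_ifs <;> rw [mulVec_strictUpper_two] <;> simp
  refine ⟨hfirst 2, ?_, hfirst 1, ?_, fun u' => ?_, fun u' => ?_, fun u' hinj => ?_⟩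
  · rw [hfirst, heaviside_eq_one_iff]
    norm_num
  · rw [hfirst]
    exact heaviside_of_neg (by norm_num)
  · rw [hfirst, houtput]
    norm_num
  · rw [hfirst, houtput]
    norm_num
  · have h21 : (2 : ℝ) = 1 := hinj (by simp only [hfirst, houtput]; norm_num)
    norm_num at h21
end
end

section
/- (Unique explicit inverse of a relative-degree-1 PWA system.) Assume the output functions are location-independent with zero feedthrough (C_{q,k} = C_k, G_{q,k} = G_k, D_{q,k} = 0 for all q, k), and C_{k+1}·B_{q,k} ≠ 0 for all q, k. Then every trajectory (x_k, u_k, y_k) of the PWA system satisfies the explicit anticausal inverse-system equations x_{k+1} = Ā_k x_k + B̄_k y_{k+1} + F̄_k and u_k = C̄_k x_k + D̄_k y_{k+1} + Ḡ_k, where, with bold symbols denoting active-location quantities, D̄_k := (C_{k+1}·𝐁_k)^{-1}, C̄_k := −D̄_k·C_{k+1}·𝐀_k, Ḡ_k := −D̄_k·(C_{k+1}·𝐅_k + G_{k+1}), Ā_k := 𝐀_k + 𝐁_k·C̄_k, B̄_k := 𝐁_k·D̄_k, and F̄_k := 𝐅_k + 𝐁_k·Ḡ_k. -/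
/-!
Relative degree one means the input `u_k` already shows up in the next output:
`y_{k+1} = C_{k+1} (𝐀_k x_k + u_k 𝐁_k + 𝐅_k) + G_{k+1}`, and the coefficient `C_{k+1} 𝐁_k` of
`u_k` is nonzero. Solving for `u_k` gives the output equation of the inverse system, and
substituting it back into the state equation gives its state equation.
-/

open Matrix

noncomputable section

section InverseStep

variable {m K : Type*} [Fintype m]

theorem mulVec_add_vecMulVec [CommRing K] (A : Matrix m m K) (b c x : m → K) :
    (A + vecMulVec b c) *ᵥ x = A *ᵥ x + (c ⬝ᵥ x) • b := by
  rw [add_mulVec, vecMulVec_mulVec, op_smul_eq_smul]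

theorem dotProduct_affine_step [CommRing K] (A : Matrix m m K) (b f c x : m → K) (u : K) :
    c ⬝ᵥ (A *ᵥ x + u • b + f) = (c ᵥ* A) ⬝ᵥ x + u * (c ⬝ᵥ b) + c ⬝ᵥ f := by
  rw [dotProduct_add, dotProduct_add, dotProduct_mulVec, dotProduct_smul, smul_eq_mul]

theorem input_eq_of_relative_degree_one [Field K] {A : Matrix m m K} {b f c x x' cbar : m → K}
    {u g y' d gbar : K} (hcb : c ⬝ᵥ b ≠ 0) (hx : x' = A *ᵥ x + u • b + f)
    (hy : y' = c ⬝ᵥ x' + g) (hd : d = (c ⬝ᵥ b)⁻¹) (hcbar : cbar = -d • (c ᵥ* A))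
    (hgbar : gbar = -d * (c ⬝ᵥ f + g)) :
    u = cbar ⬝ᵥ x + d * y' + gbar := by
  have hdcb : d * (c ⬝ᵥ b) = 1 := hd ▸ inv_mul_cancel₀ hcb
  rw [hcbar, hgbar, hy, hx, dotProduct_affine_step, smul_dotProduct, smul_eq_mul]
  linear_combination (-u) * hdcb

theorem state_eq_of_input_eq [CommRing K] {A : Matrix m m K} {b f x x' cbar : m → K}
    {u y' d gbar : K} (hx : x' = A *ᵥ x + u • b + f) (hu : u = cbar ⬝ᵥ x + d * y' + gbar) :
    x' = (A + vecMulVec b cbar) *ᵥ x + (d * y') • b + (f + gbar • b) := by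
  rw [hx, hu, mulVec_add_vecMulVec, add_smul, add_smul]
  abel

end InverseStep

theorem pwa_relative_degree_one_explicit_inverse_general
    (n L : ℕ)
    (A : Fin L → ℤ → Matrix (Fin n) (Fin n) ℝ)
    (B F : Fin L → ℤ → (Fin n → ℝ))
    -- location-independent output data with zero feedthrough
    (C : ℤ → (Fin n → ℝ)) (G : ℤ → ℝ)
    (loc : (Fin n → ℝ) → Fin L)
    -- all component models have relative degree 1
    (hCB : ∀ (q : Fin L) (k : ℤ), C (k+1) ⬝ᵥ B q k ≠ 0)
    -- a trajectory of the PWA system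
    (x : ℤ → (Fin n → ℝ)) (u y : ℤ → ℝ)
    (hx : ∀ k : ℤ, x (k+1) = (A (loc (x k)) k).mulVec (x k)
        + u k • B (loc (x k)) k + F (loc (x k)) k)
    (hy : ∀ k : ℤ, y k = C k ⬝ᵥ x k + G k)
    -- the inverse-system coefficients
    (Dbar : ℤ → ℝ) (hDbar : ∀ k, Dbar k = (C (k+1) ⬝ᵥ B (loc (x k)) k)⁻¹)
    (Cbar : ℤ → (Fin n → ℝ))
    (hCbar : ∀ k, Cbar k = -Dbar k • (C (k+1) ᵥ* A (loc (x k)) k))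
    (Gbar : ℤ → ℝ)
    (hGbar : ∀ k, Gbar k = -Dbar k * (C (k+1) ⬝ᵥ F (loc (x k)) k + G (k+1))) :
    -- Ā = 𝐀 + 𝐁 C̄,  B̄ = 𝐁 D̄,  F̄ = 𝐅 + 𝐁 Ḡ
    (∀ k : ℤ, x (k+1) =
        (A (loc (x k)) k + vecMulVec (B (loc (x k)) k) (Cbar k)).mulVec (x k)
        + (Dbar k * y (k+1)) • B (loc (x k)) k
        + (F (loc (x k)) k + Gbar k • B (loc (x k)) k)) ∧
    (∀ k : ℤ, u k = Cbar k ⬝ᵥ x k + Dbar k * y (k+1) + Gbar k) := by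
  have hu : ∀ k : ℤ, u k = Cbar k ⬝ᵥ x k + Dbar k * y (k+1) + Gbar k := fun k =>
    input_eq_of_relative_degree_one (hCB _ k) (hx k) (hy (k+1)) (hDbar k) (hCbar k) (hGbar k)
  exact ⟨fun k => state_eq_of_input_eq (hx k) (hu k), hu⟩

/-- Unique explicit inverse of a relative-degree-1 PWA system: under
location-independent output functions with zero feedthrough and `C_{k+1} B_{q,k} ≠ 0`,
every trajectory satisfies the explicit anticausal inverse-system equations. -/
theorem pwa_relative_degree_one_explicit_inverse
    (n p L : ℕ)
    (A : Fin L → ℤ → Matrix (Fin n) (Fin n) ℝ)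
    (B F : Fin L → ℤ → (Fin n → ℝ))
    -- location-independent output data with zero feedthrough
    (C : ℤ → (Fin n → ℝ)) (G : ℤ → ℝ)
    (P : Matrix (Fin p) (Fin n) ℝ) (β : Fin p → ℝ)
    (Δstar : Fin L → Set (Fin p → ℝ))
    (hdisj : Pairwise fun q q' : Fin L => Disjoint (Δstar q) (Δstar q'))
    (δ : (Fin n → ℝ) → (Fin p → ℝ))
    (hδ : ∀ x, δ x = fun i => heaviside ((P.mulVec x) i - β i))
    (loc : (Fin n → ℝ) → Fin L)
    (hloc : ∀ x, δ x ∈ Δstar (loc x))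
    -- all component models have relative degree 1
    (hCB : ∀ (q : Fin L) (k : ℤ), C (k+1) ⬝ᵥ B q k ≠ 0)
    -- a trajectory of the PWA system
    (x : ℤ → (Fin n → ℝ)) (u y : ℤ → ℝ)
    (hx : ∀ k : ℤ, x (k+1) = (A (loc (x k)) k).mulVec (x k)
        + u k • B (loc (x k)) k + F (loc (x k)) k)
    (hy : ∀ k : ℤ, y k = C k ⬝ᵥ x k + G k)
    -- the inverse-system coefficients
    (Dbar : ℤ → ℝ) (hDbar : ∀ k, Dbar k = (C (k+1) ⬝ᵥ B (loc (x k)) k)⁻¹)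
    (Cbar : ℤ → (Fin n → ℝ))
    (hCbar : ∀ k, Cbar k = -Dbar k • (C (k+1) ᵥ* A (loc (x k)) k))
    (Gbar : ℤ → ℝ)
    (hGbar : ∀ k, Gbar k = -Dbar k * (C (k+1) ⬝ᵥ F (loc (x k)) k + G (k+1))) :
    -- Ā = 𝐀 + 𝐁 C̄,  B̄ = 𝐁 D̄,  F̄ = 𝐅 + 𝐁 Ḡ
    (∀ k : ℤ, x (k+1) =
        (A (loc (x k)) k + vecMulVec (B (loc (x k)) k) (Cbar k)).mulVec (x k)
        + (Dbar k * y (k+1)) • B (loc (x k)) k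
        + (F (loc (x k)) k + Gbar k • B (loc (x k)) k)) ∧
    (∀ k : ℤ, u k = Cbar k ⬝ᵥ x k + Dbar k * y (k+1) + Gbar k) :=
  pwa_relative_degree_one_explicit_inverse_general n L A B F C G loc hCB x u y hx hy Dbar hDbar Cbar
    hCbar Gbar hGbar
end
end

section
/- (Explicitness of switching under output-based switching.) Assume the output functions are location-independent with zero feedthrough (C_{q,k} = C_k, G_{q,k} = G_k, D_{q,k} = 0 for all q, k); assume output-based switching: there exist P_o ∈ ℝ^{p×1} and β_o ∈ ℝ^p with P = P_o·C_k and β = β_o − P_o·G_k for every k; and assume C_{k+1}·B_{q,k} = 0 for all q, k. Then along any trajectory, the switching signature at time k+1 satisfies δ(x_{k+1}) = H( P_o·C_{k+1}·(𝐀_k x_k + 𝐅_k) − β_o + P_o·G_{k+1} ); in particular δ(x_{k+1}), and hence the active location at time k+1, does not depend on the input u_k. -/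
/-!
Since `P = P_o C_{k+1}` and `β = β_o − P_o G_{k+1}`, the switching signature at time `k+1` is the
Heaviside function of an affine expression in the output `C_{k+1} x_{k+1}` only. Along a
trajectory the input enters `x_{k+1}` through `u_k B_k`, which `C_{k+1}` annihilates.
-/

open Matrix

noncomputable section

namespace Matrix

variable {m n α : Type*} [Fintype n] [CommSemiring α]

theorem vecMulVec_mulVec_apply (u : m → α) (v w : n → α) (i : m) :
    (vecMulVec u v *ᵥ w) i = u i * (v ⬝ᵥ w) := by
  rw [vecMulVec_mulVec, Pi.smul_apply, op_smul_eq_mul, mul_comm]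

theorem dotProduct_add_smul_add_of_dotProduct_eq_zero {c b : n → α} (h : c ⬝ᵥ b = 0)
    (v w : n → α) (a : α) : c ⬝ᵥ (v + a • b + w) = c ⬝ᵥ (v + w) := by
  rw [dotProduct_add, dotProduct_add, dotProduct_smul, h, smul_zero, add_zero, dotProduct_add]

end Matrix

theorem heaviside_outputBased_signature {m n : Type*} [Fintype n] (Po βo : m → ℝ)
    (c x : n → ℝ) (g : ℝ) (i : m) :
    heaviside ((vecMulVec Po c *ᵥ x) i - (βo i - Po i * g))
      = heaviside (Po i * (c ⬝ᵥ x) - βo i + Po i * g) := by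
  rw [vecMulVec_mulVec_apply, sub_sub_eq_add_sub, add_sub_right_comm]

theorem pwa_output_based_switching_explicit_general
    (n p L : ℕ)
    (A : Fin L → ℤ → Matrix (Fin n) (Fin n) ℝ)
    (B F : Fin L → ℤ → (Fin n → ℝ))
    -- location-independent output data with zero feedthrough
    (C : ℤ → (Fin n → ℝ)) (G : ℤ → ℝ)
    (P : Matrix (Fin p) (Fin n) ℝ) (β : Fin p → ℝ)
    (δ : (Fin n → ℝ) → (Fin p → ℝ))
    (hδ : ∀ x, δ x = fun i => heaviside ((P.mulVec x) i - β i))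
    (loc : (Fin n → ℝ) → Fin L)
    -- output-based switching: P = P_o C_k and β = β_o − P_o G_k for every k
    (Po : Fin p → ℝ) (βo : Fin p → ℝ)
    (hPo : ∀ k : ℤ, P = Matrix.of fun i j => Po i * C k j)
    (hβo : ∀ k : ℤ, β = fun i => βo i - Po i * G k)
    -- C_{k+1} B_{q,k} = 0 for all q, k
    (hCB : ∀ (q : Fin L) (k : ℤ), C (k+1) ⬝ᵥ B q k = 0)
    -- a trajectory of the PWA system
    (x : ℤ → (Fin n → ℝ)) (u : ℤ → ℝ)
    (hx : ∀ k : ℤ, x (k+1) = (A (loc (x k)) k).mulVec (x k)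
        + u k • B (loc (x k)) k + F (loc (x k)) k) :
    ∀ k : ℤ, δ (x (k+1)) = fun i => heaviside
      (Po i * (C (k+1) ⬝ᵥ ((A (loc (x k)) k).mulVec (x k) + F (loc (x k)) k))
        - βo i + Po i * G (k+1)) := by
  intro k
  funext i
  have hP : P = vecMulVec Po (C (k+1)) := hPo (k+1)
  simp only [hδ, hβo (k+1), hP, heaviside_outputBased_signature]
  rw [hx k, dotProduct_add_smul_add_of_dotProduct_eq_zero (hCB _ k)]

/-- Explicitness of switching under output-based switching: with location-independent
output functions, zero feedthrough, output-based switching data, and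
`C_{k+1} B_{q,k} = 0`, the switching signature at time `k+1` is a function of `x_k`
alone (in particular it does not depend on the input `u_k`). -/
theorem pwa_output_based_switching_explicit
    (n p L : ℕ)
    (A : Fin L → ℤ → Matrix (Fin n) (Fin n) ℝ)
    (B F : Fin L → ℤ → (Fin n → ℝ))
    -- location-independent output data with zero feedthrough
    (C : ℤ → (Fin n → ℝ)) (G : ℤ → ℝ)
    (P : Matrix (Fin p) (Fin n) ℝ) (β : Fin p → ℝ)
    (Δstar : Fin L → Set (Fin p → ℝ))
    (hdisj : Pairwise fun q q' : Fin L => Disjoint (Δstar q) (Δstar q'))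
    (δ : (Fin n → ℝ) → (Fin p → ℝ))
    (hδ : ∀ x, δ x = fun i => heaviside ((P.mulVec x) i - β i))
    (loc : (Fin n → ℝ) → Fin L)
    (hloc : ∀ x, δ x ∈ Δstar (loc x))
    -- output-based switching: P = P_o C_k and β = β_o − P_o G_k for every k
    (Po : Fin p → ℝ) (βo : Fin p → ℝ)
    (hPo : ∀ k : ℤ, P = Matrix.of fun i j => Po i * C k j)
    (hβo : ∀ k : ℤ, β = fun i => βo i - Po i * G k)
    -- C_{k+1} B_{q,k} = 0 for all q, k
    (hCB : ∀ (q : Fin L) (k : ℤ), C (k+1) ⬝ᵥ B q k = 0)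
    -- a trajectory of the PWA system
    (x : ℤ → (Fin n → ℝ)) (u y : ℤ → ℝ)
    (hx : ∀ k : ℤ, x (k+1) = (A (loc (x k)) k).mulVec (x k)
        + u k • B (loc (x k)) k + F (loc (x k)) k)
    (hy : ∀ k : ℤ, y k = C k ⬝ᵥ x k + G k) :
    ∀ k : ℤ, δ (x (k+1)) = fun i => heaviside
      (Po i * (C (k+1) ⬝ᵥ ((A (loc (x k)) k).mulVec (x k) + F (loc (x k)) k))
        - βo i + Po i * G (k+1)) :=
  pwa_output_based_switching_explicit_general n p L A B F C G P β δ hδ loc Po βo hPo hβo hCB x u hx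
end
end

section
/- (Unique explicit inverse of a relative-degree-2 PWA system.) Assume the output functions are location-independent with zero feedthrough (C_{q,k} = C_k, G_{q,k} = G_k, D_{q,k} = 0 for all q, k); assume output-based switching: there exist P_o ∈ ℝ^{p×1} and β_o ∈ ℝ^p with P = P_o·C_k and β = β_o − P_o·G_k for every k; assume C_{k+1}·B_{q,k} = 0 for all q, k; and assume that along a given trajectory 𝒟_k := C_{k+2}·𝐀_{k+1}·𝐁_k ≠ 0 for all k. Then the trajectory satisfies the explicit anticausal inverse-system equations x_{k+1} = (𝐀_k + 𝐁_k C̄_k) x_k + 𝐁_k D̄_k y_{k+2} + 𝐅_k + 𝐁_k Ḡ_k and u_k = C̄_k x_k + D̄_k y_{k+2} + Ḡ_k, where D̄_k := 𝒟_k^{-1}, C̄_k := −D̄_k·C_{k+2}·𝐀_{k+1}·𝐀_k, and Ḡ_k := −D̄_k·( C_{k+2}·𝐀_{k+1}·𝐅_k + C_{k+2}·𝐅_{k+1} + G_{k+2} ); moreover the active location at time k+1 appearing in 𝐀_{k+1}, 𝐅_{k+1} is determined from x_k alone via δ(x_{k+1}) = H( P_o·C_{k+1}·(𝐀_k x_k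 + 𝐅_k) − β_o + P_o·G_{k+1} ), so these equations constitute an explicit PWA system with y as input and u as output. -/
/-!
Because `C_{k+1} B_{q,k} = 0`, the input `u_k` does not reach `y_{k+1}`; two steps of the state
equation give `y_{k+2} = C_{k+2} 𝐀_{k+1} 𝐀_k x_k + 𝒟_k u_k + (affine terms)`, which is solved for
`u_k` since `𝒟_k ≠ 0`, and substituting `u_k` into the state equation gives the inverse system.
For the same reason the switching argument `P x_{k+1} - β = P_o (C_{k+1} x_{k+1} + G_{k+1}) - β_o`
depends on `x_k` only through `𝐀_k x_k + 𝐅_k`.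
-/

open Matrix

noncomputable section

section AffineStep

variable {R ι : Type*} [CommRing R] [Fintype ι]

theorem vecMulVec_mulVec_eq_smul {m : Type*} (b : m → R) (c v : ι → R) :
    vecMulVec b c *ᵥ v = (c ⬝ᵥ v) • b := by
  rw [vecMulVec_mulVec, op_smul_eq_smul]

theorem dotProduct_affine_step_of_dotProduct_eq_zero {c b : ι → R} (hcb : c ⬝ᵥ b = 0)
    (A : Matrix ι ι R) (x f : ι → R) (u : R) :
    c ⬝ᵥ (A *ᵥ x + u • b + f) = c ⬝ᵥ (A *ᵥ x + f) := by
  simp only [dotProduct_add, dotProduct_smul, hcb, smul_zero, add_zero]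

theorem dotProduct_eq_of_two_affine_steps {A₀ A₁ : Matrix ι ι R}
    {x₀ x₁ x₂ b₀ b₁ f₀ f₁ c : ι → R} {u₀ u₁ : R}
    (h₁ : x₁ = A₀ *ᵥ x₀ + u₀ • b₀ + f₀) (h₂ : x₂ = A₁ *ᵥ x₁ + u₁ • b₁ + f₁)
    (hcb : c ⬝ᵥ b₁ = 0) :
    c ⬝ᵥ x₂ = (c ᵥ* A₁ ᵥ* A₀) ⬝ᵥ x₀ + u₀ * (c ⬝ᵥ A₁ *ᵥ b₀) + c ⬝ᵥ A₁ *ᵥ f₀ + c ⬝ᵥ f₁ := by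
  subst h₁ h₂
  rw [dotProduct_affine_step_of_dotProduct_eq_zero hcb, ← dotProduct_mulVec, ← dotProduct_mulVec]
  simp only [mulVec_add, mulVec_smul, dotProduct_add, dotProduct_smul, smul_eq_mul]

theorem affine_step_eq_of_input_eq {A : Matrix ι ι R} {x b f c : ι → R} {u d y g : R}
    (hu : u = c ⬝ᵥ x + d * y + g) :
    A *ᵥ x + u • b + f = (A + vecMulVec b c) *ᵥ x + (d * y) • b + (f + g • b) := by
  rw [hu, add_mulVec, vecMulVec_mulVec_eq_smul]
  module

end AffineStep

theorem input_eq_of_output_eq {K ι : Type*} [Field K] [Fintype ι] {a x : ι → K}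
    {d u y g : K} (hd : d ≠ 0) (h : y = a ⬝ᵥ x + u * d + g) :
    u = (-d⁻¹ • a) ⬝ᵥ x + d⁻¹ * y + -d⁻¹ * g := by
  rw [h, smul_dotProduct, smul_eq_mul]
  field_simp
  ring

theorem pwa_relative_degree_two_explicit_inverse_general
    (n p L : ℕ)
    (A : Fin L → ℤ → Matrix (Fin n) (Fin n) ℝ)
    (B F : Fin L → ℤ → (Fin n → ℝ))
    -- location-independent output data with zero feedthrough
    (C : ℤ → (Fin n → ℝ)) (G : ℤ → ℝ)
    (P : Matrix (Fin p) (Fin n) ℝ) (β : Fin p → ℝ)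
    (δ : (Fin n → ℝ) → (Fin p → ℝ))
    (hδ : ∀ x, δ x = fun i => heaviside ((P.mulVec x) i - β i))
    (loc : (Fin n → ℝ) → Fin L)
    -- output-based switching: P = P_o C_k and β = β_o − P_o G_k for every k
    (Po : Fin p → ℝ) (βo : Fin p → ℝ)
    (hPo : ∀ k : ℤ, P = Matrix.of fun i j => Po i * C k j)
    (hβo : ∀ k : ℤ, β = fun i => βo i - Po i * G k)
    -- C_{k+1} B_{q,k} = 0 for all q, k
    (hCB : ∀ (q : Fin L) (k : ℤ), C (k+1) ⬝ᵥ B q k = 0)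
    -- a trajectory of the PWA system
    (x : ℤ → (Fin n → ℝ)) (u y : ℤ → ℝ)
    (hx : ∀ k : ℤ, x (k+1) = (A (loc (x k)) k).mulVec (x k)
        + u k • B (loc (x k)) k + F (loc (x k)) k)
    (hy : ∀ k : ℤ, y k = C k ⬝ᵥ x k + G k)
    -- 𝒟_k = C_{k+2} 𝐀_{k+1} 𝐁_k ≠ 0 along the trajectory
    (𝒟 : ℤ → ℝ)
    (h𝒟 : ∀ k, 𝒟 k = C (k+2) ⬝ᵥ (A (loc (x (k+1))) (k+1)).mulVec (B (loc (x k)) k))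
    (h𝒟ne : ∀ k : ℤ, 𝒟 k ≠ 0)
    -- the inverse-system coefficients
    (Dbar : ℤ → ℝ) (hDbar : ∀ k, Dbar k = (𝒟 k)⁻¹)
    (Cbar : ℤ → (Fin n → ℝ))
    (hCbar : ∀ k, Cbar k =
      -Dbar k • ((C (k+2) ᵥ* A (loc (x (k+1))) (k+1)) ᵥ* A (loc (x k)) k))
    (Gbar : ℤ → ℝ)
    (hGbar : ∀ k, Gbar k = -Dbar k *
      (C (k+2) ⬝ᵥ (A (loc (x (k+1))) (k+1)).mulVec (F (loc (x k)) k)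
        + C (k+2) ⬝ᵥ F (loc (x (k+1))) (k+1) + G (k+2))) :
    -- the explicit anticausal inverse-system equations
    (∀ k : ℤ, x (k+1) =
        (A (loc (x k)) k + vecMulVec (B (loc (x k)) k) (Cbar k)).mulVec (x k)
        + (Dbar k * y (k+2)) • B (loc (x k)) k
        + (F (loc (x k)) k + Gbar k • B (loc (x k)) k)) ∧
    (∀ k : ℤ, u k = Cbar k ⬝ᵥ x k + Dbar k * y (k+2) + Gbar k) ∧
    -- the active location at time k+1 is determined from x_k alone
    (∀ k : ℤ, δ (x (k+1)) = fun i => heaviside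
      (Po i * (C (k+1) ⬝ᵥ ((A (loc (x k)) k).mulVec (x k) + F (loc (x k)) k))
        - βo i + Po i * G (k+1))) := by
  have hu : ∀ k, u k = Cbar k ⬝ᵥ x k + Dbar k * y (k+2) + Gbar k := by
    intro k
    have hout := dotProduct_eq_of_two_affine_steps (hx k) (hx (k+1)) (hCB _ (k+1))
    rw [show k + 1 + 1 = k + 2 by ring] at hout
    rw [hCbar, hGbar, hDbar]
    apply input_eq_of_output_eq (h𝒟ne k)
    rw [hy, hout, h𝒟]
    ring
  refine ⟨fun k => (hx k).trans (affine_step_eq_of_input_eq (hu k)), hu, fun k => ?_⟩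
  have hP : P = vecMulVec Po (C (k+1)) := hPo (k+1)
  rw [hδ, hP, hβo (k+1)]
  funext i
  rw [vecMulVec_mulVec_eq_smul, hx k, dotProduct_affine_step_of_dotProduct_eq_zero (hCB _ k)]
  simp only [Pi.smul_apply, smul_eq_mul]
  congr 1
  ring

/-- Unique explicit inverse of a relative-degree-2 PWA system: under location-independent
output functions with zero feedthrough, output-based switching, `C_{k+1} B_{q,k} = 0`,
and `𝒟_k = C_{k+2} 𝐀_{k+1} 𝐁_k ≠ 0` along the trajectory, the trajectory satisfies the
explicit anticausal inverse-system equations, and the switching signature at `k+1` is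
determined from `x_k` alone. -/
theorem pwa_relative_degree_two_explicit_inverse
    (n p L : ℕ)
    (A : Fin L → ℤ → Matrix (Fin n) (Fin n) ℝ)
    (B F : Fin L → ℤ → (Fin n → ℝ))
    -- location-independent output data with zero feedthrough
    (C : ℤ → (Fin n → ℝ)) (G : ℤ → ℝ)
    (P : Matrix (Fin p) (Fin n) ℝ) (β : Fin p → ℝ)
    (Δstar : Fin L → Set (Fin p → ℝ))
    (hdisj : Pairwise fun q q' : Fin L => Disjoint (Δstar q) (Δstar q'))
    (δ : (Fin n → ℝ) → (Fin p → ℝ))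
    (hδ : ∀ x, δ x = fun i => heaviside ((P.mulVec x) i - β i))
    (loc : (Fin n → ℝ) → Fin L)
    (hloc : ∀ x, δ x ∈ Δstar (loc x))
    -- output-based switching: P = P_o C_k and β = β_o − P_o G_k for every k
    (Po : Fin p → ℝ) (βo : Fin p → ℝ)
    (hPo : ∀ k : ℤ, P = Matrix.of fun i j => Po i * C k j)
    (hβo : ∀ k : ℤ, β = fun i => βo i - Po i * G k)
    -- C_{k+1} B_{q,k} = 0 for all q, k
    (hCB : ∀ (q : Fin L) (k : ℤ), C (k+1) ⬝ᵥ B q k = 0)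
    -- a trajectory of the PWA system
    (x : ℤ → (Fin n → ℝ)) (u y : ℤ → ℝ)
    (hx : ∀ k : ℤ, x (k+1) = (A (loc (x k)) k).mulVec (x k)
        + u k • B (loc (x k)) k + F (loc (x k)) k)
    (hy : ∀ k : ℤ, y k = C k ⬝ᵥ x k + G k)
    -- 𝒟_k = C_{k+2} 𝐀_{k+1} 𝐁_k ≠ 0 along the trajectory
    (𝒟 : ℤ → ℝ)
    (h𝒟 : ∀ k, 𝒟 k = C (k+2) ⬝ᵥ (A (loc (x (k+1))) (k+1)).mulVec (B (loc (x k)) k))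
    (h𝒟ne : ∀ k : ℤ, 𝒟 k ≠ 0)
    -- the inverse-system coefficients
    (Dbar : ℤ → ℝ) (hDbar : ∀ k, Dbar k = (𝒟 k)⁻¹)
    (Cbar : ℤ → (Fin n → ℝ))
    (hCbar : ∀ k, Cbar k =
      -Dbar k • ((C (k+2) ᵥ* A (loc (x (k+1))) (k+1)) ᵥ* A (loc (x k)) k))
    (Gbar : ℤ → ℝ)
    (hGbar : ∀ k, Gbar k = -Dbar k *
      (C (k+2) ⬝ᵥ (A (loc (x (k+1))) (k+1)).mulVec (F (loc (x k)) k)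
        + C (k+2) ⬝ᵥ F (loc (x (k+1))) (k+1) + G (k+2))) :
    -- the explicit anticausal inverse-system equations
    (∀ k : ℤ, x (k+1) =
        (A (loc (x k)) k + vecMulVec (B (loc (x k)) k) (Cbar k)).mulVec (x k)
        + (Dbar k * y (k+2)) • B (loc (x k)) k
        + (F (loc (x k)) k + Gbar k • B (loc (x k)) k)) ∧
    (∀ k : ℤ, u k = Cbar k ⬝ᵥ x k + Dbar k * y (k+2) + Gbar k) ∧
    -- the active location at time k+1 is determined from x_k alone
    (∀ k : ℤ, δ (x (k+1)) = fun i => heaviside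
      (Po i * (C (k+1) ⬝ᵥ ((A (loc (x k)) k).mulVec (x k) + F (loc (x k)) k))
        - βo i + Po i * G (k+1))) :=
  pwa_relative_degree_two_explicit_inverse_general n p L A B F C G P β δ hδ loc Po βo hPo hβo hCB x
    u y hx hy 𝒟 h𝒟 h𝒟ne Dbar hDbar Cbar hCbar Gbar hGbar
end
end

section
/- (PWA stable inversion with stable-mode-dependent switching.) Assume switching depends only on the stable modes: P·V^{-1} = [P̃^s, 0] for some P̃^s ∈ ℝ^{p×n_s}. Let z^s : ℤ → ℝ^{n_s} and z^u : ℤ → ℝ^{n_u} be sequences, define δ_k := H(P̃^s·z^s_k − β) and let q_k be the location with δ_k ∈ Δ*_{q_k}, and suppose for every k: z^s_{k+1} = Ã^s_{q_k,k}·z^s_k + B̃^s_{q_k,k}·y_{k+μ̄} + F̃^s_{q_k,k} (forward-in-time evolution of the stable modes) and z^u_k = (Ã^u_{q_k,k})^{-1}·( z^u_{k+1} − B̃^u_{q_k,k}·y_{k+μ̄} − F̃^u_{q_k,k} ) (backward-in-time evolution of the unstable modes). Then the sequence x_k := V^{-1}·(z^s_k, z^u_k) satisfies, for every k: H(P·x_k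 − β) = δ_k, so q_k is indeed the active location at x_k, and x_{k+1} = Ā_{q_k,k}·x_k + B̄_{q_k,k}·y_{k+μ̄} + F̄_{q_k,k}; that is, x is an exact trajectory of the inverse PWA system driven by the reference y. -/
/-! In the coordinates `z = V x` every location's dynamics is block diagonal and the switching
reads only `zˢ`, so the switching sequence is fixed by the forward stable recursion alone.
Inverting `Ãᵘ` turns the backward unstable recursion into the forward one, and the two block
recursions together say exactly that `V x` takes the PWA step conjugated by `V`. -/

open Matrix

noncomputable section

namespace Matrix

variable {l m n R : Type*} [Fintype m] [Fintype n] [CommRing R]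

theorem fromBlocks_zero_mulVec_sumElim (A : Matrix m m R) (D : Matrix n n R) (a : m → R)
    (b : n → R) : fromBlocks A 0 0 D *ᵥ Sum.elim a b = Sum.elim (A *ᵥ a) (D *ᵥ b) := by
  simp [fromBlocks_mulVec]

variable [DecidableEq m] [DecidableEq n]

theorem mulVec_nonsing_inv_mulVec {A : Matrix n n R} (hA : IsUnit A.det) (v : n → R) :
    A *ᵥ (A⁻¹ *ᵥ v) = v := by
  rw [mulVec_mulVec, mul_nonsing_inv _ hA, one_mulVec]

theorem nonsing_inv_mulVec_mulVec {A : Matrix n n R} (hA : IsUnit A.det) (v : n → R) :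
    A⁻¹ *ᵥ (A *ᵥ v) = v := by
  rw [mulVec_mulVec, nonsing_inv_mul _ hA, one_mulVec]

theorem eq_mulVec_add_of_eq_nonsing_inv_mulVec_sub {A : Matrix n n R} (hA : IsUnit A.det)
    {z w b : n → R} (h : z = A⁻¹ *ᵥ (w - b)) : w = A *ᵥ z + b := by
  rw [h, mulVec_nonsing_inv_mulVec hA, sub_add_cancel]

theorem mulVec_nonsing_inv_mulVec_sumElim_of_mul_nonsing_inv_eq_fromCols
    {P : Matrix l (m ⊕ n) R} {V : Matrix (m ⊕ n) (m ⊕ n) R} {Ps : Matrix l m R}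
    (hPs : P * V⁻¹ = fromCols Ps 0) (a : m → R) (b : n → R) :
    P *ᵥ (V⁻¹ *ᵥ Sum.elim a b) = Ps *ᵥ a := by
  rw [mulVec_mulVec, hPs, fromCols_mulVec_sumElim, zero_mulVec, add_zero]

theorem eq_mulVec_add_of_mulVec_eq_conj {A V D : Matrix n n R} (hV : IsUnit V.det)
    (hD : V * A * V⁻¹ = D) {x x' b : n → R} (h : V *ᵥ x' = D *ᵥ (V *ᵥ x) + V *ᵥ b) :
    x' = A *ᵥ x + b := by
  rw [← nonsing_inv_mulVec_mulVec hV x', h, ← hD, mulVec_mulVec, mul_assoc,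
    nonsing_inv_mul _ hV, mul_one, ← mulVec_mulVec, ← mulVec_add,
    nonsing_inv_mulVec_mulVec hV]

end Matrix

theorem pwa_stable_inversion_stable_mode_switching_general
    (ns nu p L : ℕ)
    (Abar : Fin L → ℤ → Matrix (Fin ns ⊕ Fin nu) (Fin ns ⊕ Fin nu) ℝ)
    (Bbar Fbar : Fin L → ℤ → (Fin ns ⊕ Fin nu → ℝ))
    (P : Matrix (Fin p) (Fin ns ⊕ Fin nu) ℝ) (β : Fin p → ℝ)
    (Δstar : Fin L → Set (Fin p → ℝ))
    -- the decoupling similarity transform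
    (V : Matrix (Fin ns ⊕ Fin nu) (Fin ns ⊕ Fin nu) ℝ) (hV : IsUnit V.det)
    (As : Fin L → ℤ → Matrix (Fin ns) (Fin ns) ℝ)
    (Au : Fin L → ℤ → Matrix (Fin nu) (Fin nu) ℝ)
    (hAu : ∀ (q : Fin L) (k : ℤ), IsUnit (Au q k).det)
    (hdecouple : ∀ (q : Fin L) (k : ℤ),
      V * Abar q k * V⁻¹ = Matrix.fromBlocks (As q k) 0 0 (Au q k))
    -- switching depends only on the stable modes: P V⁻¹ = [P̃ˢ, 0]
    (Ps : Matrix (Fin p) (Fin ns) ℝ)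
    (hPs : P * V⁻¹ = Matrix.fromCols Ps 0)
    -- the reference and the output preview
    (y : ℤ → ℝ) (μp : ℕ)
    -- the stable/unstable mode sequences and the switching sequence
    (zs : ℤ → (Fin ns → ℝ)) (zu : ℤ → (Fin nu → ℝ))
    (δk : ℤ → (Fin p → ℝ))
    (hδk : ∀ k : ℤ, δk k = fun i => heaviside ((Ps.mulVec (zs k)) i - β i))
    (q : ℤ → Fin L)
    (hq : ∀ k : ℤ, δk k ∈ Δstar (q k))
    -- forward-in-time evolution of the stable modes
    (hforward : ∀ k : ℤ, zs (k+1) = (As (q k) k).mulVec (zs k)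
        + y (k + (μp : ℤ)) • (fun i => V.mulVec (Bbar (q k) k) (Sum.inl i))
        + (fun i => V.mulVec (Fbar (q k) k) (Sum.inl i)))
    -- backward-in-time evolution of the unstable modes
    (hbackward : ∀ k : ℤ, zu k = (Au (q k) k)⁻¹.mulVec
        (zu (k+1) - y (k + (μp : ℤ)) • (fun i => V.mulVec (Bbar (q k) k) (Sum.inr i))
          - fun i => V.mulVec (Fbar (q k) k) (Sum.inr i)))
    -- the reconstructed state
    (x : ℤ → (Fin ns ⊕ Fin nu → ℝ))
    (hx : ∀ k : ℤ, x k = V⁻¹.mulVec (Sum.elim (zs k) (zu k))) :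
    -- the switching signature of x matches δ_k, so q k is the active location at x k
    (∀ k : ℤ, (fun i => heaviside ((P.mulVec (x k)) i - β i)) = δk k) ∧
    (∀ k : ℤ, (fun i => heaviside ((P.mulVec (x k)) i - β i)) ∈ Δstar (q k)) ∧
    -- x is an exact trajectory of the inverse PWA system driven by y
    (∀ k : ℤ, x (k+1) = (Abar (q k) k).mulVec (x k)
        + y (k + (μp : ℤ)) • Bbar (q k) k + Fbar (q k) k) := by
  have hVx : ∀ k, V *ᵥ x k = Sum.elim (zs k) (zu k) := fun k => by
    rw [hx, mulVec_nonsing_inv_mulVec hV]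
  have hsign : ∀ k, (fun i => heaviside ((P.mulVec (x k)) i - β i)) = δk k := fun k => by
    rw [hx, mulVec_nonsing_inv_mulVec_sumElim_of_mul_nonsing_inv_eq_fromCols hPs, hδk]
  refine ⟨hsign, fun k => hsign k ▸ hq k, fun k => ?_⟩
  have hunstable := eq_mulVec_add_of_eq_nonsing_inv_mulVec_sub (hAu (q k) k) (hbackward k)
  rw [sub_eq_iff_eq_add] at hunstable
  rw [add_assoc]
  refine eq_mulVec_add_of_mulVec_eq_conj hV (hdecouple (q k) k) ?_
  rw [hVx, hVx, fromBlocks_zero_mulVec_sumElim, hforward k, hunstable]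
  ext (i | i) <;> simp [mulVec_add, mulVec_smul] <;> ring

/-- PWA stable inversion with stable-mode-dependent switching: evolving the stable modes
forwards in time (which determines the switching sequence) and the unstable modes
backwards in time yields an exact trajectory of the inverse PWA system driven by the
reference. -/
theorem pwa_stable_inversion_stable_mode_switching
    (ns nu p L : ℕ)
    (Abar : Fin L → ℤ → Matrix (Fin ns ⊕ Fin nu) (Fin ns ⊕ Fin nu) ℝ)
    (Bbar Fbar : Fin L → ℤ → (Fin ns ⊕ Fin nu → ℝ))
    (P : Matrix (Fin p) (Fin ns ⊕ Fin nu) ℝ) (β : Fin p → ℝ)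
    (Δstar : Fin L → Set (Fin p → ℝ))
    (hdisj : Pairwise fun q q' : Fin L => Disjoint (Δstar q) (Δstar q'))
    -- the decoupling similarity transform
    (V : Matrix (Fin ns ⊕ Fin nu) (Fin ns ⊕ Fin nu) ℝ) (hV : IsUnit V.det)
    (As : Fin L → ℤ → Matrix (Fin ns) (Fin ns) ℝ)
    (Au : Fin L → ℤ → Matrix (Fin nu) (Fin nu) ℝ)
    (hAu : ∀ (q : Fin L) (k : ℤ), IsUnit (Au q k).det)
    (hdecouple : ∀ (q : Fin L) (k : ℤ),
      V * Abar q k * V⁻¹ = Matrix.fromBlocks (As q k) 0 0 (Au q k))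
    -- switching depends only on the stable modes: P V⁻¹ = [P̃ˢ, 0]
    (Ps : Matrix (Fin p) (Fin ns) ℝ)
    (hPs : P * V⁻¹ = Matrix.fromCols Ps 0)
    -- the reference and the output preview
    (y : ℤ → ℝ) (μp : ℕ)
    -- the stable/unstable mode sequences and the switching sequence
    (zs : ℤ → (Fin ns → ℝ)) (zu : ℤ → (Fin nu → ℝ))
    (δk : ℤ → (Fin p → ℝ))
    (hδk : ∀ k : ℤ, δk k = fun i => heaviside ((Ps.mulVec (zs k)) i - β i))
    (q : ℤ → Fin L)
    (hq : ∀ k : ℤ, δk k ∈ Δstar (q k))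
    -- forward-in-time evolution of the stable modes
    (hforward : ∀ k : ℤ, zs (k+1) = (As (q k) k).mulVec (zs k)
        + y (k + (μp : ℤ)) • (fun i => V.mulVec (Bbar (q k) k) (Sum.inl i))
        + (fun i => V.mulVec (Fbar (q k) k) (Sum.inl i)))
    -- backward-in-time evolution of the unstable modes
    (hbackward : ∀ k : ℤ, zu k = (Au (q k) k)⁻¹.mulVec
        (zu (k+1) - y (k + (μp : ℤ)) • (fun i => V.mulVec (Bbar (q k) k) (Sum.inr i))
          - fun i => V.mulVec (Fbar (q k) k) (Sum.inr i)))
    -- the reconstructed state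
    (x : ℤ → (Fin ns ⊕ Fin nu → ℝ))
    (hx : ∀ k : ℤ, x k = V⁻¹.mulVec (Sum.elim (zs k) (zu k))) :
    -- the switching signature of x matches δ_k, so q k is the active location at x k
    (∀ k : ℤ, (fun i => heaviside ((P.mulVec (x k)) i - β i)) = δk k) ∧
    (∀ k : ℤ, (fun i => heaviside ((P.mulVec (x k)) i - β i)) ∈ Δstar (q k)) ∧
    -- x is an exact trajectory of the inverse PWA system driven by y
    (∀ k : ℤ, x (k+1) = (Abar (q k) k).mulVec (x k)
        + y (k + (μp : ℤ)) • Bbar (q k) k + Fbar (q k) k) :=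
  pwa_stable_inversion_stable_mode_switching_general ns nu p L Abar Bbar Fbar P β Δstar V hV As Au
    hAu hdecouple Ps hPs y μp zs zu δk hδk q hq hforward hbackward x hx
end
end

section
/- (PWA stable inversion with unstable-mode-dependent switching.) Assume switching depends only on the unstable modes: P·V^{-1} = [0, P̃^u] for some P̃^u ∈ ℝ^{p×n_u}. Let z^s : ℤ → ℝ^{n_s} and z^u : ℤ → ℝ^{n_u} be sequences, define δ_k := H(P̃^u·z^u_k − β) and let q_k be the location with δ_k ∈ Δ*_{q_k}, and suppose for every k: z^u_k satisfies the (implicit) backward-in-time relation z^u_k = (Ã^u_{q_k,k})^{-1}·( z^u_{k+1} − B̃^u_{q_k,k}·y_{k+μ̄} − F̃^u_{q_k,k} ), and z^s satisfies the forward-in-time recursion z^s_{k+1} = Ã^s_{q_k,k}·z^s_k + B̃^s_{q_k,k}·y_{k+μ̄} + F̃^s_{q_k,k}. Then the sequence x_k := V^{-1}·(z^s_k, z^u_k) satisfies, for every k: H(P·x_k − β) = δ_k, so q_k is the active location at x_k, and x_{k+1} = Ā_{q_k,k}·x_k + B̄_{q_k,k}·y_{k+μ̄} + F̄_{q_k,k};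 that is, x is an exact trajectory of the inverse PWA system driven by the reference y. -/
open Matrix

noncomputable section

/-!
The switching signature of `x = V⁻¹ (zˢ, zᵘ)` is `H(P̃ᵘ zᵘ - β)` because `P V⁻¹` vanishes
on the stable block, so the backward relation for `zᵘ` is solved along the very switching
sequence it determines. Multiplying that relation by `Ãᵘ` turns it into a forward recursion,
so in modal coordinates `(zˢ, zᵘ)` follows the block-diagonal system `V Ā V⁻¹`; conjugating
back by `V⁻¹` gives the PWA recursion for `x`.
-/

namespace Matrix

variable {m n R : Type*} [Fintype m] [Fintype n] [CommRing R]

lemma mulVec_eq_of_eq_nonsing_inv_mulVec [DecidableEq n] {A : Matrix n n R} (hA : IsUnit A.det)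
    {z w : n → R} (h : z = A⁻¹ *ᵥ w) : A *ᵥ z = w := by
  rw [h, mulVec_mulVec, mul_nonsing_inv A hA, one_mulVec]

lemma nonsing_inv_mulVec_conj_mulVec_add [DecidableEq n] {V A D : Matrix n n R}
    (hV : IsUnit V.det) (hconj : V * A * V⁻¹ = D) (z b : n → R) :
    V⁻¹ *ᵥ (D *ᵥ z + V *ᵥ b) = A *ᵥ (V⁻¹ *ᵥ z) + b := by
  rw [← hconj, mulVec_add, mulVec_mulVec, mulVec_mulVec, mulVec_mulVec, ← Matrix.mul_assoc,
    ← Matrix.mul_assoc, nonsing_inv_mul V hV, Matrix.one_mul, one_mulVec]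

lemma mulVec_nonsing_inv_mulVec_sumElim_of_fromCols_zero [DecidableEq m] [DecidableEq n]
    {l : Type*} {P : Matrix l (m ⊕ n) R} {V : Matrix (m ⊕ n) (m ⊕ n) R} {Pu : Matrix l n R}
    (hPu : P * V⁻¹ = fromCols 0 Pu) (zs : m → R) (zu : n → R) :
    P *ᵥ (V⁻¹ *ᵥ Sum.elim zs zu) = Pu *ᵥ zu := by
  rw [mulVec_mulVec, hPu, fromCols_mulVec_sumElim, zero_mulVec, zero_add]

lemma fromBlocks_zero_zero_mulVec_sumElim_add (A : Matrix m m R) (D : Matrix n n R) (a : m → R)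
    (b : n → R) (w : m ⊕ n → R) :
    fromBlocks A 0 0 D *ᵥ Sum.elim a b + w =
      Sum.elim (A *ᵥ a + w ∘ Sum.inl) (D *ᵥ b + w ∘ Sum.inr) := by
  ext (i | i) <;> simp [fromBlocks_mulVec]

end Matrix

theorem pwa_stable_inversion_unstable_mode_switching_general
    (ns nu p L : ℕ)
    (Abar : Fin L → ℤ → Matrix (Fin ns ⊕ Fin nu) (Fin ns ⊕ Fin nu) ℝ)
    (Bbar Fbar : Fin L → ℤ → (Fin ns ⊕ Fin nu → ℝ))
    (P : Matrix (Fin p) (Fin ns ⊕ Fin nu) ℝ) (β : Fin p → ℝ)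
    (Δstar : Fin L → Set (Fin p → ℝ))
    -- the decoupling similarity transform
    (V : Matrix (Fin ns ⊕ Fin nu) (Fin ns ⊕ Fin nu) ℝ) (hV : IsUnit V.det)
    (As : Fin L → ℤ → Matrix (Fin ns) (Fin ns) ℝ)
    (Au : Fin L → ℤ → Matrix (Fin nu) (Fin nu) ℝ)
    (hAu : ∀ (q : Fin L) (k : ℤ), IsUnit (Au q k).det)
    (hdecouple : ∀ (q : Fin L) (k : ℤ),
      V * Abar q k * V⁻¹ = Matrix.fromBlocks (As q k) 0 0 (Au q k))
    -- switching depends only on the unstable modes: P V⁻¹ = [0, P̃ᵘ]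
    (Pu : Matrix (Fin p) (Fin nu) ℝ)
    (hPu : P * V⁻¹ = Matrix.fromCols 0 Pu)
    -- the reference and the output preview
    (y : ℤ → ℝ) (μp : ℕ)
    -- the stable/unstable mode sequences and the switching sequence
    (zs : ℤ → (Fin ns → ℝ)) (zu : ℤ → (Fin nu → ℝ))
    (δk : ℤ → (Fin p → ℝ))
    (hδk : ∀ k : ℤ, δk k = fun i => heaviside ((Pu.mulVec (zu k)) i - β i))
    (q : ℤ → Fin L)
    (hq : ∀ k : ℤ, δk k ∈ Δstar (q k))
    -- the implicit backward-in-time relation for the unstable modes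
    (hbackward : ∀ k : ℤ, zu k = (Au (q k) k)⁻¹.mulVec
        (zu (k+1) - y (k + (μp : ℤ)) • (fun i => V.mulVec (Bbar (q k) k) (Sum.inr i))
          - fun i => V.mulVec (Fbar (q k) k) (Sum.inr i)))
    -- the forward-in-time recursion for the stable modes
    (hforward : ∀ k : ℤ, zs (k+1) = (As (q k) k).mulVec (zs k)
        + y (k + (μp : ℤ)) • (fun i => V.mulVec (Bbar (q k) k) (Sum.inl i))
        + (fun i => V.mulVec (Fbar (q k) k) (Sum.inl i)))
    -- the reconstructed state
    (x : ℤ → (Fin ns ⊕ Fin nu → ℝ))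
    (hx : ∀ k : ℤ, x k = V⁻¹.mulVec (Sum.elim (zs k) (zu k))) :
    -- the switching signature of x matches δ_k, so q k is the active location at x k
    (∀ k : ℤ, (fun i => heaviside ((P.mulVec (x k)) i - β i)) = δk k) ∧
    (∀ k : ℤ, (fun i => heaviside ((P.mulVec (x k)) i - β i)) ∈ Δstar (q k)) ∧
    -- x is an exact trajectory of the inverse PWA system driven by y
    (∀ k : ℤ, x (k+1) = (Abar (q k) k).mulVec (x k)
        + y (k + (μp : ℤ)) • Bbar (q k) k + Fbar (q k) k) := by
  have hsignature : ∀ k : ℤ, (fun i => heaviside ((P.mulVec (x k)) i - β i)) = δk k := by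
    intro k
    simp only [hδk k, hx k, mulVec_nonsing_inv_mulVec_sumElim_of_fromCols_zero hPu]
  refine ⟨hsignature, fun k => hsignature k ▸ hq k, fun k => ?_⟩
  have hunstable := mulVec_eq_of_eq_nonsing_inv_mulVec (hAu (q k) k) (hbackward k)
  have hmodes : Sum.elim (zs (k+1)) (zu (k+1)) = fromBlocks (As (q k) k) 0 0 (Au (q k) k)
      *ᵥ Sum.elim (zs k) (zu k) + V *ᵥ (y (k + μp) • Bbar (q k) k + Fbar (q k) k) := by
    rw [fromBlocks_zero_zero_mulVec_sumElim_add, hforward k, hunstable]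
    ext (i | i) <;>
      simp only [Sum.elim_inl, Sum.elim_inr, Pi.add_apply, Pi.sub_apply, Pi.smul_apply,
        Function.comp_apply, mulVec_add, mulVec_smul, smul_eq_mul] <;> ring
  rw [hx (k+1), hmodes, nonsing_inv_mulVec_conj_mulVec_add hV (hdecouple (q k) k), ← hx k,
    add_assoc]

/-- PWA stable inversion with unstable-mode-dependent switching: solving the implicit
backward-in-time relation for the unstable modes (which determines the switching
sequence) and evolving the stable modes forwards in time yields an exact trajectory of
the inverse PWA system driven by the reference. -/
theorem pwa_stable_inversion_unstable_mode_switching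
    (ns nu p L : ℕ)
    (Abar : Fin L → ℤ → Matrix (Fin ns ⊕ Fin nu) (Fin ns ⊕ Fin nu) ℝ)
    (Bbar Fbar : Fin L → ℤ → (Fin ns ⊕ Fin nu → ℝ))
    (P : Matrix (Fin p) (Fin ns ⊕ Fin nu) ℝ) (β : Fin p → ℝ)
    (Δstar : Fin L → Set (Fin p → ℝ))
    (hdisj : Pairwise fun q q' : Fin L => Disjoint (Δstar q) (Δstar q'))
    -- the decoupling similarity transform
    (V : Matrix (Fin ns ⊕ Fin nu) (Fin ns ⊕ Fin nu) ℝ) (hV : IsUnit V.det)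
    (As : Fin L → ℤ → Matrix (Fin ns) (Fin ns) ℝ)
    (Au : Fin L → ℤ → Matrix (Fin nu) (Fin nu) ℝ)
    (hAu : ∀ (q : Fin L) (k : ℤ), IsUnit (Au q k).det)
    (hdecouple : ∀ (q : Fin L) (k : ℤ),
      V * Abar q k * V⁻¹ = Matrix.fromBlocks (As q k) 0 0 (Au q k))
    -- switching depends only on the unstable modes: P V⁻¹ = [0, P̃ᵘ]
    (Pu : Matrix (Fin p) (Fin nu) ℝ)
    (hPu : P * V⁻¹ = Matrix.fromCols 0 Pu)
    -- the reference and the output preview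
    (y : ℤ → ℝ) (μp : ℕ)
    -- the stable/unstable mode sequences and the switching sequence
    (zs : ℤ → (Fin ns → ℝ)) (zu : ℤ → (Fin nu → ℝ))
    (δk : ℤ → (Fin p → ℝ))
    (hδk : ∀ k : ℤ, δk k = fun i => heaviside ((Pu.mulVec (zu k)) i - β i))
    (q : ℤ → Fin L)
    (hq : ∀ k : ℤ, δk k ∈ Δstar (q k))
    -- the implicit backward-in-time relation for the unstable modes
    (hbackward : ∀ k : ℤ, zu k = (Au (q k) k)⁻¹.mulVec
        (zu (k+1) - y (k + (μp : ℤ)) • (fun i => V.mulVec (Bbar (q k) k) (Sum.inr i))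
          - fun i => V.mulVec (Fbar (q k) k) (Sum.inr i)))
    -- the forward-in-time recursion for the stable modes
    (hforward : ∀ k : ℤ, zs (k+1) = (As (q k) k).mulVec (zs k)
        + y (k + (μp : ℤ)) • (fun i => V.mulVec (Bbar (q k) k) (Sum.inl i))
        + (fun i => V.mulVec (Fbar (q k) k) (Sum.inl i)))
    -- the reconstructed state
    (x : ℤ → (Fin ns ⊕ Fin nu → ℝ))
    (hx : ∀ k : ℤ, x k = V⁻¹.mulVec (Sum.elim (zs k) (zu k))) :
    -- the switching signature of x matches δ_k, so q k is the active location at x k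
    (∀ k : ℤ, (fun i => heaviside ((P.mulVec (x k)) i - β i)) = δk k) ∧
    (∀ k : ℤ, (fun i => heaviside ((P.mulVec (x k)) i - β i)) ∈ Δstar (q k)) ∧
    -- x is an exact trajectory of the inverse PWA system driven by y
    (∀ k : ℤ, x (k+1) = (Abar (q k) k).mulVec (x k)
        + y (k + (μp : ℤ)) • Bbar (q k) k + Fbar (q k) k) :=
  pwa_stable_inversion_unstable_mode_switching_general ns nu p L Abar Bbar Fbar P β Δstar V hV As Au
    hAu hdecouple Pu hPu y μp zs zu δk hδk q hq hbackward hforward x hx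
end
end
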